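/- arXiv:0704.3335 — 8 statements merged into one kernel-verified Lean document; each statement's English description precedes it below -/
import Mathlib

section
/- The function v(x,y,z,z̄) = ln(x+b(z,y)) + ln(x+b̄(z̄,y)) − 2·ln(z+z̄) satisfies the hyperbolic Boyer–Finley equation v_{z z̄} = (e^v)_{xx}, where b is holomorphic in z and b̄ is its complex conjugate (antiholomorphic in z̄), on a domain where x+b, x+b̄ and z+z̄ are positive. -/
/-!
The logarithms of `x + b` and `x + b̄` each depend on only one of `z`, `z̄`, so they drop out of
the mixed derivative and `v_{z z̄} = -2 ∂_z ∂_z̄ log (z + z̄) = 2 / (z + z̄)²`. On the other side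
`e^v = (x + b) (x + b̄) / (z + z̄)²` is a quadratic polynomial in `x` with leading coefficient
`1 / (z + z̄)²`, whose second `x`-derivative is the same.
-/

open Complex ComplexConjugate Filter Topology

section MixedDerivative

variable {𝕜 F : Type*} [NontriviallyNormedField 𝕜] [NormedAddCommGroup F] [NormedSpace 𝕜 F]

theorem deriv_deriv_add_sub_eq_neg {f g : 𝕜 → F} {k : 𝕜 → 𝕜 → F} {z w : 𝕜}
    (hg : DifferentiableAt 𝕜 g w) (hk : ∀ᶠ z' in 𝓝 z, DifferentiableAt 𝕜 (k z') w) :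
    deriv (fun z' => deriv (fun w' => f z' + g w' - k z' w') w) z =
      -deriv (fun z' => deriv (k z') w) z := by
  have hinner : (fun z' => deriv (fun w' => f z' + g w' - k z' w') w) =ᶠ[𝓝 z]
      fun z' => deriv g w - deriv (k z') w := by
    filter_upwards [hk] with z' hz'
    exact (((hasDerivAt_const w (f z')).add hg.hasDerivAt).sub hz'.hasDerivAt).deriv.trans
      (by rw [zero_add])
  rw [hinner.deriv_eq, deriv_const_sub]

end MixedDerivative

theorem eventually_re_add_pos {z w : ℂ} (h : 0 < (z + w).re) : ∀ᶠ z' in 𝓝 z, 0 < (z' + w).re :=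
  continuousAt_const.eventually_lt (by fun_prop) h

theorem hasDerivAt_log_add {z w : ℂ} (h : 0 < (z + w).re) :
    HasDerivAt (fun w' => log (z + w')) (z + w)⁻¹ w := by
  simpa using ((hasDerivAt_id w).const_add z).clog (Or.inl h)

theorem deriv_deriv_log_add {z w : ℂ} (h : 0 < (z + w).re) :
    deriv (fun z' => deriv (fun w' => log (z' + w')) w) z = -((z + w) ^ 2)⁻¹ := by
  have hinner : (fun z' => deriv (fun w' => log (z' + w')) w) =ᶠ[𝓝 z] fun z' => (z' + w)⁻¹ := by
    filter_upwards [eventually_re_add_pos h] with z' hz' using (hasDerivAt_log_add hz').deriv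
  rw [hinner.deriv_eq]
  refine (((hasDerivAt_id' z).add_const w).inv (ne_zero_of_re_pos h)).deriv.trans ?_
  rw [neg_div, one_div]

theorem exp_log_add_log_sub_two_mul_log {a b c : ℂ} (ha : a ≠ 0) (hb : b ≠ 0) (hc : c ≠ 0) :
    exp (log a + log b - 2 * log c) = a * b * (c ^ 2)⁻¹ := by
  rw [exp_sub, exp_add, exp_log ha, exp_log hb, two_mul, exp_add, exp_log hc]
  ring

theorem deriv_deriv_ofReal_add_mul_ofReal_add (p q c : ℂ) (x : ℝ) :
    deriv (fun s : ℝ => deriv (fun t : ℝ => ((t : ℂ) + p) * ((t : ℂ) + q) * c) s) x = 2 * c := by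
  have hofReal (t : ℝ) : HasDerivAt (fun t : ℝ => (t : ℂ)) 1 t := by
    simpa using (hasDerivAt_id t).ofReal_comp
  have hinner : deriv (fun t : ℝ => ((t : ℂ) + p) * ((t : ℂ) + q) * c) =
      fun s : ℝ => (2 * (s : ℂ) + p + q) * c := by
    funext s
    refine ((((hofReal s).add_const p).mul ((hofReal s).add_const q)).mul_const c).deriv.trans ?_
    ring
  rw [hinner]
  refine (((((hofReal x).const_mul 2).add_const p).add_const q).mul_const c).deriv.trans ?_
  ring

theorem boyer_finley_of_log_solution
    (b bb : ℂ → ℝ → ℂ)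
    (hb : ∀ y, Differentiable ℂ (fun z => b z y))
    (hbb : ∀ (w : ℂ) (y : ℝ), bb w y = (starRingEnd ℂ) (b ((starRingEnd ℂ) w) y))
    (v : ℝ → ℝ → ℂ → ℂ → ℂ)
    (hv : ∀ (x y : ℝ) (z w : ℂ), v x y z w =
      Complex.log ((x : ℂ) + b z y) + Complex.log ((x : ℂ) + bb w y)
        - 2 * Complex.log (z + w)) :
    ∀ (x y : ℝ) (z w : ℂ),
      0 < ((x : ℂ) + b z y).re → 0 < ((x : ℂ) + bb w y).re → 0 < (z + w).re →
      -- v_{z z̄} = (e^v)_{xx}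
      deriv (fun z' => deriv (fun w' => v x y z' w') w) z =
        deriv (fun x' : ℝ => deriv (fun x'' : ℝ => Complex.exp (v x'' y z w)) x') x := by
  intro x y z w hbx hbbw hzw
  have hbb_diff : DifferentiableAt ℂ (fun w' => bb w' y) w := by
    have : (fun w' => bb w' y) = conj ∘ (fun z => b z y) ∘ conj := funext fun w' => hbb w' y
    rw [this, differentiableAt_conj_conj_iff]
    exact hb y _
  have hlhs : deriv (fun z' => deriv (fun w' => v x y z' w') w) z = 2 * ((z + w) ^ 2)⁻¹ := by
    have hlog_bb : DifferentiableAt ℂ (fun w' => log (x + bb w' y)) w :=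
      ((differentiableAt_const (x : ℂ)).add hbb_diff).clog (Or.inl hbbw)
    have hlog_add : ∀ᶠ z' in 𝓝 z, DifferentiableAt ℂ (fun w' => 2 * log (z' + w')) w := by
      filter_upwards [eventually_re_add_pos hzw] with z' hz'
      exact (hasDerivAt_log_add hz').differentiableAt.const_mul 2
    simp only [hv]
    rw [deriv_deriv_add_sub_eq_neg (f := fun z' => log (x + b z' y)) hlog_bb hlog_add]
    simp only [deriv_const_mul_field']
    rw [deriv_deriv_log_add hzw]
    ring
  have hexp : (fun x' : ℝ => exp (v x' y z w)) =ᶠ[𝓝 x]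
      fun x' : ℝ => ((x' : ℂ) + b z y) * ((x' : ℂ) + bb w y) * ((z + w) ^ 2)⁻¹ := by
    have hre_cont (c : ℂ) : ContinuousAt (fun x' : ℝ => ((x' : ℂ) + c).re) x := by fun_prop
    filter_upwards [continuousAt_const.eventually_lt (hre_cont _) hbx,
      continuousAt_const.eventually_lt (hre_cont _) hbbw] with x' hbx' hbbw'
    rw [hv, exp_log_add_log_sub_two_mul_log (ne_zero_of_re_pos hbx') (ne_zero_of_re_pos hbbw')
      (ne_zero_of_re_pos hzw)]
  rw [hlhs, hexp.deriv.deriv_eq, deriv_deriv_ofReal_add_mul_ofReal_add]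
end

section
/- If ψ(x,y,z,z̄) satisfies ψ_x = v where v = ln(x+b) + ln(x+b̄) − 2·ln(z+z̄), i.e. ψ = (x+b)·ln(x+b) + (x+b̄)·ln(x+b̄) − 2x·(ln(z+z̄)+1) + F(z,z̄,y), then ψ satisfies the equation ψ_{z z̄} = e^{ψ_x}·ψ_{xx} if and only if F_{z z̄} = (b+b̄)/(z+z̄)². -/
/-!
Both sides of the equation are computed in closed form. Along `x` the potential has
`ψ_x = log(x+b) + log(x+b̄) - 2 log(z+z̄)` and `ψ_xx = 1/(x+b) + 1/(x+b̄)`, so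
`e^{ψ_x} ψ_xx = (2x + b + b̄)/(z+z̄)²`. In the mixed derivative `ψ_{zz̄}` the terms depending only
on `z` or only on `z̄` drop out (this is where holomorphy of `b̄ = conj ∘ b ∘ conj` enters), leaving
`2x/(z+z̄)² + F_{zz̄}`. The `2x/(z+z̄)²` cancels against the right-hand side.
-/

open Complex Filter Topology ComplexConjugate

lemma hasDerivAt_add_mul_log_add {B u : ℂ} (hu : u + B ∈ slitPlane) :
    HasDerivAt (fun t => (t + B) * log (t + B)) (log (u + B) + 1) u := by
  have hshift := (hasDerivAt_id' u).add_const B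
  exact (hshift.mul (hshift.clog hu)).congr_deriv (by field_simp [slitPlane_ne_zero hu])

lemma exp_log_add_log_sub_two_mul_log_mul {a c s : ℂ} (ha : a ≠ 0) (hc : c ≠ 0) (hs : s ≠ 0) :
    exp (log a + log c - 2 * log s) * (a⁻¹ + c⁻¹) = (a + c) / s ^ 2 := by
  rw [exp_sub, exp_add, two_mul, exp_add, exp_log ha, exp_log hc, exp_log hs]
  field_simp
  ring

lemma eventually_add_mem_slitPlane {z w : ℂ} (hzw : z + w ∈ slitPlane) :
    ∀ᶠ z' in 𝓝 z, z' + w ∈ slitPlane :=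
  (continuous_add_const w).continuousAt.preimage_mem_nhds (isOpen_slitPlane.mem_nhds hzw)

lemma deriv_deriv_add_add_of_separated {A G : ℂ → ℂ} {K : ℂ → ℂ → ℂ} {z w : ℂ}
    (hG : DifferentiableAt ℂ G w) (hK : ∀ᶠ z' in 𝓝 z, DifferentiableAt ℂ (K z') w) :
    deriv (fun z' => deriv (fun w' => A z' + G w' + K z' w') w) z
      = deriv (fun z' => deriv (K z') w) z := by
  have hsplit : (fun z' => deriv (fun w' => A z' + G w' + K z' w') w)
      =ᶠ[𝓝 z] fun z' => deriv G w + deriv (K z') w := by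
    filter_upwards [hK] with z' hz'
    exact (((hasDerivAt_const w (A z')).add hG.hasDerivAt).add hz'.hasDerivAt).deriv.trans
      (by rw [zero_add])
  rw [hsplit.deriv_eq, deriv_const_add]

lemma deriv_deriv_sub_const_mul_log_add {H : ℂ → ℂ → ℂ} {z w : ℂ} (c : ℂ)
    (hH : ∀ᶠ z' in 𝓝 z, DifferentiableAt ℂ (H z') w)
    (hHz : DifferentiableAt ℂ (fun z' => deriv (H z') w) z) (hzw : z + w ∈ slitPlane) :
    deriv (fun z' => deriv (fun w' => H z' w' - c * (log (z' + w') + 1)) w) z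
      = deriv (fun z' => deriv (H z') w) z + c / (z + w) ^ 2 := by
  have hsplit : (fun z' => deriv (fun w' => H z' w' - c * (log (z' + w') + 1)) w)
      =ᶠ[𝓝 z] fun z' => deriv (H z') w - c * (z' + w)⁻¹ := by
    filter_upwards [hH, eventually_add_mem_slitPlane hzw] with z' hz' hz'w
    have hlog : HasDerivAt (fun w' => log (z' + w')) (z' + w)⁻¹ w := by
      simpa using ((hasDerivAt_id w).const_add z').clog hz'w
    exact (hz'.hasDerivAt.sub ((hlog.add_const 1).const_mul c)).deriv
  have hinv := ((hasDerivAt_id' z).add_const w).inv (slitPlane_ne_zero hzw)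
  rw [hsplit.deriv_eq]
  exact (hHz.hasDerivAt.sub (hinv.const_mul c)).deriv.trans (by ring)

section Potential

variable {B C L K : ℂ} {x : ℝ}

lemma hasDerivAt_potential_x (hB : (x : ℂ) + B ∈ slitPlane) (hC : (x : ℂ) + C ∈ slitPlane) :
    HasDerivAt (fun t : ℝ => ((t : ℂ) + B) * log ((t : ℂ) + B)
        + ((t : ℂ) + C) * log ((t : ℂ) + C) - 2 * (t : ℂ) * (L + 1) + K)
      (log ((x : ℂ) + B) + log ((x : ℂ) + C) - 2 * L) x := by
  have hlin : HasDerivAt (fun t : ℂ => 2 * t * (L + 1)) (2 * (L + 1)) x := by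
    simpa using ((hasDerivAt_id (x : ℂ)).const_mul 2).mul_const (L + 1)
  exact ((((hasDerivAt_add_mul_log_add hB).add (hasDerivAt_add_mul_log_add hC)).sub
    hlin).add_const K).comp_ofReal.congr_deriv (by ring)

lemma deriv_deriv_potential_x (hB : (x : ℂ) + B ∈ slitPlane) (hC : (x : ℂ) + C ∈ slitPlane) :
    deriv (deriv fun t : ℝ => ((t : ℂ) + B) * log ((t : ℂ) + B)
        + ((t : ℂ) + C) * log ((t : ℂ) + C) - 2 * (t : ℂ) * (L + 1) + K) x
      = ((x : ℂ) + B)⁻¹ + ((x : ℂ) + C)⁻¹ := by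
  have hnear : ∀ D : ℂ, (x : ℂ) + D ∈ slitPlane → ∀ᶠ t : ℝ in 𝓝 x, (t : ℂ) + D ∈ slitPlane :=
    fun D hD => (continuous_ofReal.add continuous_const).continuousAt.preimage_mem_nhds
      (isOpen_slitPlane.mem_nhds hD)
  have hderiv : deriv (fun t : ℝ => ((t : ℂ) + B) * log ((t : ℂ) + B)
        + ((t : ℂ) + C) * log ((t : ℂ) + C) - 2 * (t : ℂ) * (L + 1) + K)
      =ᶠ[𝓝 x] fun t : ℝ => log ((t : ℂ) + B) + log ((t : ℂ) + C) - 2 * L := by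
    filter_upwards [hnear B hB, hnear C hC] with t htB htC
    exact (hasDerivAt_potential_x htB htC).deriv
  have hshift : ∀ D : ℂ, HasDerivAt (fun t : ℝ => (t : ℂ) + D) 1 x := fun D => by
    simpa using (hasDerivAt_id x).ofReal_comp.add_const D
  rw [hderiv.deriv_eq]
  simpa using ((((hshift B).clog_real hB).add
    ((hshift C).clog_real hC)).sub_const (2 * L)).deriv

end Potential

lemma deriv_deriv_potential_zw {A G : ℂ → ℂ} {H : ℂ → ℂ → ℂ} {z w : ℂ} (c : ℂ)
    (hG : DifferentiableAt ℂ G w) (hH : ∀ᶠ z' in 𝓝 z, DifferentiableAt ℂ (H z') w)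
    (hHz : DifferentiableAt ℂ (fun z' => deriv (H z') w) z) (hzw : z + w ∈ slitPlane) :
    deriv (fun z' => deriv (fun w' => A z' + G w' - c * (log (z' + w') + 1) + H z' w') w) z
      = deriv (fun z' => deriv (H z') w) z + c / (z + w) ^ 2 := by
  have hK : ∀ᶠ z' in 𝓝 z, DifferentiableAt ℂ (fun w' => H z' w' - c * (log (z' + w') + 1)) w :=
    (hH.and (eventually_add_mem_slitPlane hzw)).mono fun z' ⟨hz', hz'w⟩ => hz'.sub
      ((((differentiableAt_id.const_add z').clog hz'w).add_const 1).const_mul c)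
  rw [← deriv_deriv_sub_const_mul_log_add c hH hHz hzw,
    ← deriv_deriv_add_add_of_separated (A := A) hG hK]
  congr! 3 with z'
  funext w'
  ring

theorem potential_boyer_finley_iff_F
    (b bb : ℂ → ℝ → ℂ)
    (hb : ∀ y, Differentiable ℂ (fun z => b z y))
    (hbb : ∀ (w : ℂ) (y : ℝ), bb w y = (starRingEnd ℂ) (b ((starRingEnd ℂ) w) y))
    (F : ℂ → ℂ → ℝ → ℂ)
    (hF1 : ∀ (y : ℝ) (z : ℂ), Differentiable ℂ (fun w => F z w y))
    (hF2 : ∀ (y : ℝ) (w : ℂ), Differentiable ℂ (fun z => deriv (fun w' => F z w' y) w))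
    (ψ : ℝ → ℝ → ℂ → ℂ → ℂ)
    (hψ : ∀ (x y : ℝ) (z w : ℂ), ψ x y z w =
      ((x : ℂ) + b z y) * Complex.log ((x : ℂ) + b z y)
      + ((x : ℂ) + bb w y) * Complex.log ((x : ℂ) + bb w y)
      - 2 * (x : ℂ) * (Complex.log (z + w) + 1) + F z w y) :
    ∀ (x y : ℝ) (z w : ℂ),
      0 < ((x : ℂ) + b z y).re → 0 < ((x : ℂ) + bb w y).re → 0 < (z + w).re →
      ( -- ψ_{z z̄} = e^{ψ_x} ψ_{xx}
        deriv (fun z' => deriv (fun w' => ψ x y z' w') w) z =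
          Complex.exp (deriv (fun x' : ℝ => ψ x' y z w) x) *
            deriv (fun x' : ℝ => deriv (fun x'' : ℝ => ψ x'' y z w) x') x
        ↔
        -- F_{z z̄} = (b+b̄)/(z+z̄)²
        deriv (fun z' => deriv (fun w' => F z' w' y) w) z =
          (b z y + bb w y) / (z + w) ^ 2 ) := by
  intro x y z w hB_re hC_re hzw_re
  obtain ⟨hB, hC, hzw⟩ : (x : ℂ) + b z y ∈ slitPlane ∧ (x : ℂ) + bb w y ∈ slitPlane ∧
      z + w ∈ slitPlane := ⟨Or.inl hB_re, Or.inl hC_re, Or.inl hzw_re⟩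
  have hbb_diff : DifferentiableAt ℂ (fun w' => bb w' y) w := by
    rw [show (fun w' => bb w' y) = conj ∘ (fun z => b z y) ∘ conj from funext (hbb · y)]
    exact differentiableAt_conj_conj_iff.mpr (hb y _)
  have hG : DifferentiableAt ℂ (fun w' => ((x : ℂ) + bb w' y) * log ((x : ℂ) + bb w' y)) w :=
    (hbb_diff.const_add _).mul ((hbb_diff.const_add _).clog hC)
  simp only [hψ]
  rw [deriv_deriv_potential_zw _ hG (.of_forall fun z' => hF1 y z' w) (hF2 y w z) hzw,
    (hasDerivAt_potential_x hB hC).deriv, deriv_deriv_potential_x hB hC,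
    exp_log_add_log_sub_two_mul_log_mul (slitPlane_ne_zero hB) (slitPlane_ne_zero hC)
      (slitPlane_ne_zero hzw)]
  constructor <;> intro h <;> linear_combination h
end

section
/- Let u be a smooth function of z₁, z̄₁, z₂, z̄₂ and define the operators L₁ = λ(u_{1 2̄}D_{1̄} − u_{1 1̄}D_{2̄}) and L₂ = λ(u_{2 2̄}D_{1̄} − u_{2 1̄}D_{2̄}), where D_{1̄}, D_{2̄} are total derivative operators in z̄₁, z̄₂ and λ is a nonzero complex constant. Then the commutator satisfies [L₁, L₂] = λ²{ (u_{1 1̄}u_{2 2̄} − u_{1 2̄}u_{2 1̄})_{1̄} D_{2̄} − (u_{1 1̄}u_{2 2̄} − u_{1 2̄}u_{2 1̄})_{2̄} D_{1̄} }. In particular, if u satisfies the hyperbolic complex Monge–Ampère equation u_{1 1̄}u_{2 2̄} − u_{1 2̄}u_{2 1̄} = −1, then L₁ and L₂ commute. -/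
/-!
Both operators are (0,1)-vector fields of the form `p ∂_{z̄₁} − q ∂_{z̄₂}`, so their commutator is
again such a field, with coefficients given by the Lie bracket formula. For the coefficients
`u_{12̄}, u_{11̄}` and `u_{22̄}, u_{21̄}` these are, by symmetry of the mixed partials `∂_{z̄₁}∂_{z̄₂}`
of `u_1` and `u_2`, exactly the antiholomorphic derivatives of the Monge–Ampère determinant,
which vanish when the determinant is constant.
-/

noncomputable section

/-- Functions of the four independent complex variables (z₁, z̄₁, z₂, z̄₂). -/
abbrev F4 := ℂ → ℂ → ℂ → ℂ → ℂ

/-- Partial derivative in the 1st slot (z₁, resp. q). -/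
def D1 (f : F4) : F4 := fun a b c d => deriv (fun t => f t b c d) a
/-- Partial derivative in the 2nd slot (z̄₁, resp. q̄). -/
def D2 (f : F4) : F4 := fun a b c d => deriv (fun t => f a t c d) b
/-- Partial derivative in the 3rd slot (z₂, resp. z). -/
def D3 (f : F4) : F4 := fun a b c d => deriv (fun t => f a b t d) c
/-- Partial derivative in the 4th slot (z̄₂, resp. z̄). -/
def D4 (f : F4) : F4 := fun a b c d => deriv (fun t => f a b c t) d

/-- Smoothness of a function of the four complex variables. -/
def Sm (f : F4) : Prop :=
  ContDiff ℂ ⊤ (fun p : ℂ × ℂ × ℂ × ℂ => f p.1 p.2.1 p.2.2.1 p.2.2.2)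

/-- The operator L₁ = λ(u_{1 2̄} D_{1̄} − u_{1 1̄} D_{2̄}). -/
def opL1 (lam : ℂ) (u : F4) (φ : F4) : F4 := fun a b c d =>
  lam * (D4 (D1 u) a b c d * D2 φ a b c d - D2 (D1 u) a b c d * D4 φ a b c d)

/-- The operator L₂ = λ(u_{2 2̄} D_{1̄} − u_{2 1̄} D_{2̄}). -/
def opL2 (lam : ℂ) (u : F4) (φ : F4) : F4 := fun a b c d =>
  lam * (D4 (D3 u) a b c d * D2 φ a b c d - D2 (D3 u) a b c d * D4 φ a b c d)

/-- The Monge–Ampère determinant u_{1 1̄}u_{2 2̄} − u_{1 2̄}u_{2 1̄}. -/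
def MAdet (u : F4) : F4 := fun a b c d =>
  D2 (D1 u) a b c d * D4 (D3 u) a b c d - D4 (D1 u) a b c d * D2 (D3 u) a b c d

theorem ContDiff.fderiv_fderiv_apply_comm {𝕜 E F : Type*} [RCLike 𝕜] [NormedAddCommGroup E]
    [NormedSpace 𝕜 E] [NormedAddCommGroup F] [NormedSpace 𝕜 F] {g : E → F}
    (hg : ContDiff 𝕜 2 g) (x v w : E) :
    fderiv 𝕜 (fun y => fderiv 𝕜 g y v) x w = fderiv 𝕜 (fun y => fderiv 𝕜 g y w) x v := by
  have hdiff : Differentiable 𝕜 (fderiv 𝕜 g) :=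
    (hg.fderiv_right (m := 1) le_rfl).differentiable one_ne_zero
  have hsymm := (hg.contDiffAt (x := x)).isSymmSndFDerivAt
    (by simp [minSmoothness_of_isRCLikeNormedField])
  rw [fderiv_clm_apply (hdiff x) (differentiableAt_const v),
    fderiv_clm_apply (hdiff x) (differentiableAt_const w)]
  simpa using hsymm w v

def uncurry4 (f : F4) : ℂ × ℂ × ℂ × ℂ → ℂ := fun p => f p.1 p.2.1 p.2.2.1 p.2.2.2

section

variable {f g f' g' : F4}

namespace Sm

theorem fderiv_apply (hf : Sm f) (v : ℂ × ℂ × ℂ × ℂ) :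
    Sm (fun a b c d => fderiv ℂ (uncurry4 f) (a, b, c, d) v) :=
  (hf.fderiv_right le_top).clm_apply contDiff_const

theorem hasDerivAt_slot1 (hf : Sm f) (a b c d : ℂ) :
    HasDerivAt (fun t => f t b c d) (fderiv ℂ (uncurry4 f) (a, b, c, d) (1, 0, 0, 0)) a :=
  (hf.differentiable (by simp) _).hasFDerivAt.comp_hasDerivAt (f := fun t => (t, b, c, d)) a
    ((hasDerivAt_id a).prodMk
      ((hasDerivAt_const a b).prodMk ((hasDerivAt_const a c).prodMk (hasDerivAt_const a d))))

theorem hasDerivAt_slot2 (hf : Sm f) (a b c d : ℂ) :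
    HasDerivAt (fun t => f a t c d) (fderiv ℂ (uncurry4 f) (a, b, c, d) (0, 1, 0, 0)) b :=
  (hf.differentiable (by simp) _).hasFDerivAt.comp_hasDerivAt (f := fun t => (a, t, c, d)) b
    ((hasDerivAt_const b a).prodMk
      ((hasDerivAt_id b).prodMk ((hasDerivAt_const b c).prodMk (hasDerivAt_const b d))))

theorem hasDerivAt_slot3 (hf : Sm f) (a b c d : ℂ) :
    HasDerivAt (fun t => f a b t d) (fderiv ℂ (uncurry4 f) (a, b, c, d) (0, 0, 1, 0)) c :=
  (hf.differentiable (by simp) _).hasFDerivAt.comp_hasDerivAt (f := fun t => (a, b, t, d)) c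
    ((hasDerivAt_const c a).prodMk
      ((hasDerivAt_const c b).prodMk ((hasDerivAt_id c).prodMk (hasDerivAt_const c d))))

theorem hasDerivAt_slot4 (hf : Sm f) (a b c d : ℂ) :
    HasDerivAt (fun t => f a b c t) (fderiv ℂ (uncurry4 f) (a, b, c, d) (0, 0, 0, 1)) d :=
  (hf.differentiable (by simp) _).hasFDerivAt.comp_hasDerivAt (f := fun t => (a, b, c, t)) d
    ((hasDerivAt_const d a).prodMk
      ((hasDerivAt_const d b).prodMk ((hasDerivAt_const d c).prodMk (hasDerivAt_id d))))

theorem D1_eq (hf : Sm f) :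
    D1 f = fun a b c d => fderiv ℂ (uncurry4 f) (a, b, c, d) (1, 0, 0, 0) := by
  ext a b c d; exact (hf.hasDerivAt_slot1 a b c d).deriv

theorem D2_eq (hf : Sm f) :
    D2 f = fun a b c d => fderiv ℂ (uncurry4 f) (a, b, c, d) (0, 1, 0, 0) := by
  ext a b c d; exact (hf.hasDerivAt_slot2 a b c d).deriv

theorem D3_eq (hf : Sm f) :
    D3 f = fun a b c d => fderiv ℂ (uncurry4 f) (a, b, c, d) (0, 0, 1, 0) := by
  ext a b c d; exact (hf.hasDerivAt_slot3 a b c d).deriv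

theorem D4_eq (hf : Sm f) :
    D4 f = fun a b c d => fderiv ℂ (uncurry4 f) (a, b, c, d) (0, 0, 0, 1) := by
  ext a b c d; exact (hf.hasDerivAt_slot4 a b c d).deriv

theorem hasDerivAt_D2 (hf : Sm f) (a b c d : ℂ) :
    HasDerivAt (fun t => f a t c d) (D2 f a b c d) b :=
  (hf.hasDerivAt_slot2 a b c d).differentiableAt.hasDerivAt

theorem hasDerivAt_D4 (hf : Sm f) (a b c d : ℂ) :
    HasDerivAt (fun t => f a b c t) (D4 f a b c d) d :=
  (hf.hasDerivAt_slot4 a b c d).differentiableAt.hasDerivAt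

end Sm

theorem Sm.D1 (hf : Sm f) : Sm (D1 f) := hf.D1_eq ▸ hf.fderiv_apply _

theorem Sm.D2 (hf : Sm f) : Sm (D2 f) := hf.D2_eq ▸ hf.fderiv_apply _

theorem Sm.D3 (hf : Sm f) : Sm (D3 f) := hf.D3_eq ▸ hf.fderiv_apply _

theorem Sm.D4 (hf : Sm f) : Sm (D4 f) := hf.D4_eq ▸ hf.fderiv_apply _

theorem D2_D4_comm (hf : Sm f) : D2 (D4 f) = D4 (D2 f) := by
  rw [hf.D4_eq, hf.D2_eq, (hf.fderiv_apply _).D2_eq, (hf.fderiv_apply _).D4_eq]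
  ext a b c d
  exact (hf.of_le (by simp)).fderiv_fderiv_apply_comm _ _ _

theorem D2_mul_sub_mul (hf : Sm f) (hg : Sm g) (hf' : Sm f') (hg' : Sm g') (a b c d : ℂ) :
    D2 (fun a b c d => f a b c d * g a b c d - f' a b c d * g' a b c d) a b c d =
      D2 f a b c d * g a b c d + f a b c d * D2 g a b c d
        - (D2 f' a b c d * g' a b c d + f' a b c d * D2 g' a b c d) :=
  (((hf.hasDerivAt_D2 a b c d).mul (hg.hasDerivAt_D2 a b c d)).sub
    ((hf'.hasDerivAt_D2 a b c d).mul (hg'.hasDerivAt_D2 a b c d))).deriv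

theorem D4_mul_sub_mul (hf : Sm f) (hg : Sm g) (hf' : Sm f') (hg' : Sm g') (a b c d : ℂ) :
    D4 (fun a b c d => f a b c d * g a b c d - f' a b c d * g' a b c d) a b c d =
      D4 f a b c d * g a b c d + f a b c d * D4 g a b c d
        - (D4 f' a b c d * g' a b c d + f' a b c d * D4 g' a b c d) :=
  (((hf.hasDerivAt_D4 a b c d).mul (hg.hasDerivAt_D4 a b c d)).sub
    ((hf'.hasDerivAt_D4 a b c d).mul (hg'.hasDerivAt_D4 a b c d))).deriv

end

def dbarField (p q φ : F4) : F4 := fun a b c d =>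
  p a b c d * D2 φ a b c d - q a b c d * D4 φ a b c d

theorem D2_const_mul (k : ℂ) (f : F4) :
    D2 (fun a b c d => k * f a b c d) = fun a b c d => k * D2 f a b c d := by
  ext a b c d; exact deriv_const_mul_field k

theorem D4_const_mul (k : ℂ) (f : F4) :
    D4 (fun a b c d => k * f a b c d) = fun a b c d => k * D4 f a b c d := by
  ext a b c d; exact deriv_const_mul_field k

theorem dbarField_const_mul (p q : F4) (k : ℂ) (f : F4) :
    dbarField p q (fun a b c d => k * f a b c d) = fun a b c d => k * dbarField p q f a b c d := by
  ext a b c d; simp only [dbarField, D2_const_mul, D4_const_mul]; ring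

theorem dbarField_commutator {p q r s φ : F4} (hp : Sm p) (hq : Sm q) (hr : Sm r) (hs : Sm s)
    (hφ : Sm φ) (a b c d : ℂ) :
    dbarField p q (dbarField r s φ) a b c d - dbarField r s (dbarField p q φ) a b c d =
      (dbarField p q r a b c d - dbarField r s p a b c d) * D2 φ a b c d
        - (dbarField p q s a b c d - dbarField r s q a b c d) * D4 φ a b c d := by
  unfold dbarField
  simp only [D2_mul_sub_mul hr hφ.D2 hs hφ.D4, D4_mul_sub_mul hr hφ.D2 hs hφ.D4,
    D2_mul_sub_mul hp hφ.D2 hq hφ.D4, D4_mul_sub_mul hp hφ.D2 hq hφ.D4, D2_D4_comm hφ]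
  ring

theorem dbarField_bracket_D2_coeff {u : F4} (hu : Sm u) (a b c d : ℂ) :
    dbarField (D4 (D1 u)) (D2 (D1 u)) (D4 (D3 u)) a b c d
      - dbarField (D4 (D3 u)) (D2 (D3 u)) (D4 (D1 u)) a b c d = -D4 (MAdet u) a b c d := by
  unfold dbarField MAdet
  simp only [D4_mul_sub_mul hu.D1.D2 hu.D3.D4 hu.D1.D4 hu.D3.D2,
    D2_D4_comm hu.D1, D2_D4_comm hu.D3]
  ring

theorem dbarField_bracket_D4_coeff {u : F4} (hu : Sm u) (a b c d : ℂ) :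
    dbarField (D4 (D1 u)) (D2 (D1 u)) (D2 (D3 u)) a b c d
      - dbarField (D4 (D3 u)) (D2 (D3 u)) (D2 (D1 u)) a b c d = -D2 (MAdet u) a b c d := by
  unfold dbarField MAdet
  simp only [D2_mul_sub_mul hu.D1.D2 hu.D3.D4 hu.D1.D4 hu.D3.D2,
    D2_D4_comm hu.D1, D2_D4_comm hu.D3]
  ring

theorem opL1_eq (lam : ℂ) (u φ : F4) :
    opL1 lam u φ = fun a b c d => lam * dbarField (D4 (D1 u)) (D2 (D1 u)) φ a b c d := rfl

theorem opL2_eq (lam : ℂ) (u φ : F4) :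
    opL2 lam u φ = fun a b c d => lam * dbarField (D4 (D3 u)) (D2 (D3 u)) φ a b c d := rfl

theorem opL1_opL2_sub_opL2_opL1 (lam : ℂ) {u φ : F4} (hu : Sm u) (hφ : Sm φ) (a b c d : ℂ) :
    opL1 lam u (opL2 lam u φ) a b c d - opL2 lam u (opL1 lam u φ) a b c d =
      lam ^ 2 * (D2 (MAdet u) a b c d * D4 φ a b c d - D4 (MAdet u) a b c d * D2 φ a b c d) := by
  have hbracket := dbarField_commutator hu.D1.D4 hu.D1.D2 hu.D3.D4 hu.D3.D2 hφ a b c d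
  rw [dbarField_bracket_D2_coeff hu, dbarField_bracket_D4_coeff hu] at hbracket
  simp only [opL1_eq, opL2_eq, dbarField_const_mul]
  linear_combination lam ^ 2 * hbracket

theorem partner_operators_commutator_general
    (lam : ℂ) (u φ : F4) (hu : Sm u) (hφ : Sm φ) :
    (∀ a b c d : ℂ,
      opL1 lam u (opL2 lam u φ) a b c d - opL2 lam u (opL1 lam u φ) a b c d =
        lam ^ 2 * (D2 (MAdet u) a b c d * D4 φ a b c d
                 - D4 (MAdet u) a b c d * D2 φ a b c d)) ∧
    ((∀ a b c d : ℂ, MAdet u a b c d = -1) →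
      ∀ a b c d : ℂ,
        opL1 lam u (opL2 lam u φ) a b c d = opL2 lam u (opL1 lam u φ) a b c d) := by
  refine ⟨opL1_opL2_sub_opL2_opL1 lam hu hφ, fun hMA a b c d => ?_⟩
  have hconst : MAdet u = fun _ _ _ _ => -1 := by ext a b c d; exact hMA a b c d
  have hcomm := opL1_opL2_sub_opL2_opL1 lam hu hφ a b c d
  simp only [hconst, D2, D4, deriv_const, zero_mul, sub_zero, mul_zero] at hcomm
  exact sub_eq_zero.mp hcomm

theorem partner_operators_commutator
    (lam : ℂ) (hlam : lam ≠ 0) (u φ : F4) (hu : Sm u) (hφ : Sm φ) :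
    (∀ a b c d : ℂ,
      opL1 lam u (opL2 lam u φ) a b c d - opL2 lam u (opL1 lam u φ) a b c d =
        lam ^ 2 * (D2 (MAdet u) a b c d * D4 φ a b c d
                 - D4 (MAdet u) a b c d * D2 φ a b c d)) ∧
    ((∀ a b c d : ℂ, MAdet u a b c d = -1) →
      ∀ a b c d : ℂ,
        opL1 lam u (opL2 lam u φ) a b c d = opL2 lam u (opL1 lam u φ) a b c d) :=
  partner_operators_commutator_general lam u φ hu hφ
end
end

section
/- With L₁ = λ(u_{1 2̄}D_{1̄} − u_{1 1̄}D_{2̄}) and L₂ = λ(u_{2 2̄}D_{1̄} − u_{2 1̄}D_{2̄}) acting on smooth functions of (z₁, z̄₁, z₂, z̄₂), the operator identity D₁L₂ − D₂L₁ = L₂D₁ − L₁D₂ holds, where D₁, D₂ are partial derivative operators in z₁, z₂. -/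
noncomputable section

/-!
Every slot derivative `D1, …, D4` of a smooth function is a directional Fréchet derivative
`∂_v`, and directional derivatives of smooth functions commute. Writing
`L_w = λ (w_{2̄} ∂_{1̄} − w_{1̄} ∂_{2̄})`, so that `L₁ = L_{u_1}` and `L₂ = L_{u_2}`, the Leibniz
rule and the commutation of `∂_v` with `∂_{1̄}`, `∂_{2̄}` give `[∂_v, L_w] = L_{∂_v w}`. Hence
`(D₁L₂ − D₂L₁) − (L₂D₁ − L₁D₂) = L_{u_{21}} − L_{u_{12}}`, which vanishes
by the symmetry of the mixed partials of `u`.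
-/

namespace PartnerOperator

abbrev E4 := ℂ × ℂ × ℂ × ℂ

def uncurry4 (f : F4) : E4 → ℂ := fun p => f p.1 p.2.1 p.2.2.1 p.2.2.2

def dirDeriv (v : E4) (f : F4) : F4 := fun a b c d => fderiv ℂ (uncurry4 f) (a, b, c, d) v

def e₁ : E4 := (1, 0, 0, 0)
def e₂ : E4 := (0, 1, 0, 0)
def e₃ : E4 := (0, 0, 1, 0)
def e₄ : E4 := (0, 0, 0, 1)

variable {f g : F4}

theorem _root_.Sm.differentiable (hf : Sm f) : Differentiable ℂ (uncurry4 f) :=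
  ContDiff.differentiable hf (by simp)

theorem _root_.Sm.dirDeriv (hf : Sm f) (v : E4) : Sm (dirDeriv v f) :=
  (ContDiff.fderiv_right hf (m := ⊤) le_top).clm_apply contDiff_const

theorem _root_.Sm.mul (hf : Sm f) (hg : Sm g) : Sm (f * g) := ContDiff.mul hf hg

theorem _root_.Sm.sub (hf : Sm f) (hg : Sm g) : Sm (f - g) := ContDiff.sub hf hg

theorem _root_.Sm.const_smul (hf : Sm f) (c : ℂ) : Sm (c • f) := ContDiff.const_smul c hf

theorem _root_.Sm.hasDerivAt_comp (hf : Sm f) {γ : ℂ → E4} {v : E4} {t : ℂ}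
    (hγ : HasDerivAt γ v t) :
    HasDerivAt (fun s => uncurry4 f (γ s)) (fderiv ℂ (uncurry4 f) (γ t) v) t :=
  (hf.differentiable (γ t)).hasFDerivAt.comp_hasDerivAt t hγ

theorem D1_eq_dirDeriv (hf : Sm f) : D1 f = dirDeriv e₁ f := by
  funext a b c d
  exact (hf.hasDerivAt_comp ((hasDerivAt_id a).prodMk ((hasDerivAt_const a b).prodMk
    ((hasDerivAt_const a c).prodMk (hasDerivAt_const a d))))).deriv

theorem D2_eq_dirDeriv (hf : Sm f) : D2 f = dirDeriv e₂ f := by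
  funext a b c d
  exact (hf.hasDerivAt_comp ((hasDerivAt_const b a).prodMk ((hasDerivAt_id b).prodMk
    ((hasDerivAt_const b c).prodMk (hasDerivAt_const b d))))).deriv

theorem D3_eq_dirDeriv (hf : Sm f) : D3 f = dirDeriv e₃ f := by
  funext a b c d
  exact (hf.hasDerivAt_comp ((hasDerivAt_const c a).prodMk ((hasDerivAt_const c b).prodMk
    ((hasDerivAt_id c).prodMk (hasDerivAt_const c d))))).deriv

theorem D4_eq_dirDeriv (hf : Sm f) : D4 f = dirDeriv e₄ f := by
  funext a b c d
  exact (hf.hasDerivAt_comp ((hasDerivAt_const d a).prodMk ((hasDerivAt_const d b).prodMk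
    ((hasDerivAt_const d c).prodMk (hasDerivAt_id d))))).deriv

theorem dirDeriv_mul (hf : Sm f) (hg : Sm g) (v : E4) :
    dirDeriv v (f * g) = dirDeriv v f * g + f * dirDeriv v g := by
  funext a b c d
  have h := fderiv_mul (hf.differentiable (a, b, c, d)) (hg.differentiable (a, b, c, d))
  change fderiv ℂ (uncurry4 f * uncurry4 g) _ v = _
  rw [h]
  simp only [uncurry4, dirDeriv, Pi.add_apply, Pi.mul_apply, add_apply, smul_apply, smul_eq_mul]
  ring

theorem dirDeriv_sub (hf : Sm f) (hg : Sm g) (v : E4) :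
    dirDeriv v (f - g) = dirDeriv v f - dirDeriv v g := by
  funext a b c d
  exact congrArg (· v)
    (fderiv_sub (hf.differentiable (a, b, c, d)) (hg.differentiable (a, b, c, d)))

theorem dirDeriv_const_smul (hf : Sm f) (c : ℂ) (v : E4) :
    dirDeriv v (c • f) = c • dirDeriv v f := by
  funext a b c' d
  exact congrArg (· v) (fderiv_const_smul (hf.differentiable (a, b, c', d)) c)

theorem dirDeriv_comm (hf : Sm f) (v w : E4) :
    dirDeriv v (dirDeriv w f) = dirDeriv w (dirDeriv v f) := by
  funext a b c d
  have hf' : ContDiff ℂ ⊤ (fderiv ℂ (uncurry4 f)) := ContDiff.fderiv_right hf (m := ⊤) le_top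
  have second : ∀ v w : E4, fderiv ℂ (fun q => fderiv ℂ (uncurry4 f) q w) (a, b, c, d) v =
      fderiv ℂ (fderiv ℂ (uncurry4 f)) (a, b, c, d) v w := fun v w => by
    rw [fderiv_clm_apply (hf'.differentiable (by simp) _) (differentiableAt_const w)]
    simp
  exact (second v w).trans
    (((ContDiff.contDiffAt hf).isSymmSndFDerivAt_of_omega v w).trans (second w v).symm)

/-- `L_w φ = λ (w_{2̄} φ_{1̄} − w_{1̄} φ_{2̄})`. -/
def opL (lam : ℂ) (w φ : F4) : F4 :=
  lam • (dirDeriv e₄ w * dirDeriv e₂ φ - dirDeriv e₂ w * dirDeriv e₄ φ)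

variable {u w φ : F4}

theorem _root_.Sm.opL (hw : Sm w) (hφ : Sm φ) (lam : ℂ) : Sm (opL lam w φ) :=
  (((hw.dirDeriv _).mul (hφ.dirDeriv _)).sub ((hw.dirDeriv _).mul (hφ.dirDeriv _))).const_smul lam

theorem dirDeriv_opL (hw : Sm w) (hφ : Sm φ) (lam : ℂ) (v : E4) :
    dirDeriv v (opL lam w φ) = opL lam (dirDeriv v w) φ + opL lam w (dirDeriv v φ) := by
  have hw₂ := hw.dirDeriv e₂
  have hw₄ := hw.dirDeriv e₄
  have hφ₂ := hφ.dirDeriv e₂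
  have hφ₄ := hφ.dirDeriv e₄
  rw [opL, dirDeriv_const_smul ((hw₄.mul hφ₂).sub (hw₂.mul hφ₄)),
    dirDeriv_sub (hw₄.mul hφ₂) (hw₂.mul hφ₄), dirDeriv_mul hw₄ hφ₂, dirDeriv_mul hw₂ hφ₄, opL, opL,
    dirDeriv_comm hw v e₄, dirDeriv_comm hw v e₂, dirDeriv_comm hφ v e₂, dirDeriv_comm hφ v e₄]
  module

theorem opL1_eq_opL (hu : Sm u) (hφ : Sm φ) (lam : ℂ) :
    opL1 lam u φ = opL lam (dirDeriv e₁ u) φ := by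
  unfold opL1
  rw [D1_eq_dirDeriv hu, D2_eq_dirDeriv (hu.dirDeriv e₁), D4_eq_dirDeriv (hu.dirDeriv e₁),
    D2_eq_dirDeriv hφ, D4_eq_dirDeriv hφ]
  rfl

theorem opL2_eq_opL (hu : Sm u) (hφ : Sm φ) (lam : ℂ) :
    opL2 lam u φ = opL lam (dirDeriv e₃ u) φ := by
  unfold opL2
  rw [D3_eq_dirDeriv hu, D2_eq_dirDeriv (hu.dirDeriv e₃), D4_eq_dirDeriv (hu.dirDeriv e₃),
    D2_eq_dirDeriv hφ, D4_eq_dirDeriv hφ]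
  rfl

end PartnerOperator

open PartnerOperator in
theorem partner_operator_identity
    (lam : ℂ) (u φ : F4) (hu : Sm u) (hφ : Sm φ) :
    ∀ a b c d : ℂ,
      D1 (opL2 lam u φ) a b c d - D3 (opL1 lam u φ) a b c d =
        opL2 lam u (D1 φ) a b c d - opL1 lam u (D3 φ) a b c d := by
  suffices h : D1 (opL2 lam u φ) - D3 (opL1 lam u φ) = opL2 lam u (D1 φ) - opL1 lam u (D3 φ) from
    fun a b c d => congrFun (congrFun (congrFun (congrFun h a) b) c) d
  rw [D1_eq_dirDeriv hφ, D3_eq_dirDeriv hφ, opL2_eq_opL hu hφ, opL1_eq_opL hu hφ,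
    opL2_eq_opL hu (hφ.dirDeriv e₁), opL1_eq_opL hu (hφ.dirDeriv e₃),
    D1_eq_dirDeriv ((hu.dirDeriv e₃).opL hφ lam), D3_eq_dirDeriv ((hu.dirDeriv e₁).opL hφ lam),
    dirDeriv_opL (hu.dirDeriv e₃) hφ, dirDeriv_opL (hu.dirDeriv e₁) hφ, dirDeriv_comm hu e₁ e₃]
  abel
end
end

section
/- Suppose ψ(q, q̄, z, z̄) satisfies the two constraint equations e^{ψ_{q̄}}(ψ_{q̄ q̄} + ψ_{q q̄}) = λ ψ_{q z̄} and λ e^{ψ_q}(ψ_{qq} + ψ_{q q̄}) = ψ_{q̄ z}. Then ψ satisfies the Legendre-transformed hyperbolic complex Monge–Ampère equation ψ_{q q̄}ψ_{z z̄} − ψ_{q z̄}ψ_{q̄ z} = e^{ψ_q + ψ_{q̄}}(ψ_{q q̄}² − ψ_{qq}ψ_{q̄ q̄}) if and only if it satisfies the Boyer–Finley equation ψ_{z z̄} = e^{ψ_q + ψ_{q̄}}(ψ_{qq} + 2ψ_{q q̄} + ψ_{q̄ q̄}), provided ψ_{q q̄} ≠ 0. -/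
noncomputable section

/-! Multiplying the two constraints eliminates `λ` and expresses `ψ_{qz̄} ψ_{q̄z}` through
second `q`-derivatives. Substituted into the Legendre-transformed HCMA equation, this turns
it into `ψ_{qq̄}` times the Boyer–Finley equation. -/

section

variable {K : Type*} [Field K]

theorem mul_eq_of_partner_constraints {lam P Q E₁ E₂ a b c : K} (hlam : lam ≠ 0)
    (h₁ : E₂ * (c + b) = lam * P) (h₂ : lam * E₁ * (a + b) = Q) :
    P * Q = E₁ * E₂ * ((a + b) * (c + b)) := by
  refine mul_left_cancel₀ hlam ?_
  calc lam * (P * Q) = lam * P * Q := by ring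
    _ = E₂ * (c + b) * (lam * E₁ * (a + b)) := by rw [h₁, h₂]
    _ = lam * (E₁ * E₂ * ((a + b) * (c + b))) := by ring

theorem hcma_iff_boyer_finley_of_mul_eq {P Q Z E a b c : K} (hb : b ≠ 0)
    (hPQ : P * Q = E * ((a + b) * (c + b))) :
    b * Z - P * Q = E * (b ^ 2 - a * c) ↔ Z = E * (a + 2 * b + c) := by
  have key : b * Z - P * Q - E * (b ^ 2 - a * c) = b * (Z - E * (a + 2 * b + c)) := by
    rw [hPQ]
    ring
  rw [← sub_eq_zero, key, mul_eq_zero, sub_eq_zero, or_iff_right hb]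

end

theorem legendre_hcma_iff_boyer_finley_general
    (lam : ℂ) (hlam : lam ≠ 0) (ψ : F4) (q qb z zb : ℂ)
    (hc1 : Complex.exp (D2 ψ q qb z zb) *
        (D2 (D2 ψ) q qb z zb + D2 (D1 ψ) q qb z zb) = lam * D4 (D1 ψ) q qb z zb)
    (hc2 : lam * Complex.exp (D1 ψ q qb z zb) *
        (D1 (D1 ψ) q qb z zb + D2 (D1 ψ) q qb z zb) = D3 (D2 ψ) q qb z zb)
    (hnz : D2 (D1 ψ) q qb z zb ≠ 0) :
    (D2 (D1 ψ) q qb z zb * D4 (D3 ψ) q qb z zb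
        - D4 (D1 ψ) q qb z zb * D3 (D2 ψ) q qb z zb
      = Complex.exp (D1 ψ q qb z zb + D2 ψ q qb z zb) *
          ((D2 (D1 ψ) q qb z zb) ^ 2 - D1 (D1 ψ) q qb z zb * D2 (D2 ψ) q qb z zb))
    ↔
    (D4 (D3 ψ) q qb z zb
      = Complex.exp (D1 ψ q qb z zb + D2 ψ q qb z zb) *
          (D1 (D1 ψ) q qb z zb + 2 * D2 (D1 ψ) q qb z zb + D2 (D2 ψ) q qb z zb)) := by
  rw [Complex.exp_add]
  exact hcma_iff_boyer_finley_of_mul_eq hnz (mul_eq_of_partner_constraints hlam hc1 hc2)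

theorem legendre_hcma_iff_boyer_finley
    (lam : ℂ) (hlam : lam ≠ 0) (ψ : F4) (hψ : Sm ψ) (q qb z zb : ℂ)
    (hc1 : Complex.exp (D2 ψ q qb z zb) *
        (D2 (D2 ψ) q qb z zb + D2 (D1 ψ) q qb z zb) = lam * D4 (D1 ψ) q qb z zb)
    (hc2 : lam * Complex.exp (D1 ψ q qb z zb) *
        (D1 (D1 ψ) q qb z zb + D2 (D1 ψ) q qb z zb) = D3 (D2 ψ) q qb z zb)
    (hnz : D2 (D1 ψ) q qb z zb ≠ 0) :
    (D2 (D1 ψ) q qb z zb * D4 (D3 ψ) q qb z zb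
        - D4 (D1 ψ) q qb z zb * D3 (D2 ψ) q qb z zb
      = Complex.exp (D1 ψ q qb z zb + D2 ψ q qb z zb) *
          ((D2 (D1 ψ) q qb z zb) ^ 2 - D1 (D1 ψ) q qb z zb * D2 (D2 ψ) q qb z zb))
    ↔
    (D4 (D3 ψ) q qb z zb
      = Complex.exp (D1 ψ q qb z zb + D2 ψ q qb z zb) *
          (D1 (D1 ψ) q qb z zb + 2 * D2 (D1 ψ) q qb z zb + D2 (D2 ψ) q qb z zb)) :=
  legendre_hcma_iff_boyer_finley_general lam hlam ψ q qb z zb hc1 hc2 hnz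
end
end

section
/- Suppose ψ and ω are smooth functions of x, z, z̄ satisfying the Bäcklund system ω_z = ψ_z − 2λ e^{(ψ_x + ω_x)/2} and ω_{z̄} = −ψ_{z̄} + 2λ⁻¹ e^{(ψ_x − ω_x)/2}. Then the compatibility condition (ω_z)_{z̄} = (ω_{z̄})_z is equivalent to ψ satisfying the Boyer–Finley equation ψ_{z z̄} = e^{ψ_x}ψ_{xx}, and the compatibility condition (ψ_z)_{z̄} = (ψ_{z̄})_z (after expressing ψ_z, ψ_{z̄} from the system) is equivalent to ω_{z z̄} − e^{ψ_x}ω_{xx} = 0. -/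
noncomputable section

/-- Functions of (x, z, z̄) with x real and z, z̄ independent complex variables. -/
abbrev F3 := ℝ → ℂ → ℂ → ℂ

/-- ∂/∂x. -/
def Dx (f : F3) : F3 := fun x z w => deriv (fun t : ℝ => f t z w) x
/-- ∂/∂z. -/
def Dz (f : F3) : F3 := fun x z w => deriv (fun t => f x t w) z
/-- ∂/∂z̄. -/
def Dw (f : F3) : F3 := fun x z w => deriv (fun t => f x z t) w

/-- Smoothness of a function of (x, z, z̄): jointly real-smooth and
holomorphic in each complex slot, together with its partial derivatives. -/
def Sm3 (f : F3) : Prop :=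
  ContDiff ℝ (⊤ : ℕ∞) (fun p : ℝ × ℂ × ℂ => f p.1 p.2.1 p.2.2)
  ∧ (∀ x w, Differentiable ℂ (fun z => f x z w))
  ∧ (∀ x z, Differentiable ℂ (fun w => f x z w))
  ∧ (∀ x w, Differentiable ℂ (fun z => Dx f x z w))
  ∧ (∀ x z, Differentiable ℂ (fun w => Dx f x z w))
  ∧ (∀ x w, Differentiable ℂ (fun z => Dw f x z w))
  ∧ (∀ x z, Differentiable ℂ (fun w => Dz f x z w))

namespace BacklundAux

/-- slice of a jointly differentiable function in the x-direction -/
lemma sliceX {E : Type*} [NormedAddCommGroup E] [NormedSpace ℝ E]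
    {Q : ℝ × ℂ × ℂ → E} {Q' : ℝ × ℂ × ℂ →L[ℝ] E} {x : ℝ} {z w : ℂ}
    (h : HasFDerivAt Q Q' (x, z, w)) :
    HasDerivAt (fun t : ℝ => Q (t, z, w)) (Q' (1, 0, 0)) x := by
  have hi : HasDerivAt (fun t : ℝ => ((t, z, w) : ℝ × ℂ × ℂ)) ((1 : ℝ), (0 : ℂ), (0 : ℂ)) x :=
    HasDerivAt.prodMk (hasDerivAt_id x) (HasDerivAt.prodMk (hasDerivAt_const x z) (hasDerivAt_const x w))
  exact h.comp_hasDerivAt x hi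

lemma derivZ {Q : ℝ × ℂ × ℂ → ℂ} {Q' : ℝ × ℂ × ℂ →L[ℝ] ℂ} {x : ℝ} {z w : ℂ}
    (h : HasFDerivAt Q Q' (x, z, w))
    (hd : DifferentiableAt ℂ (fun t : ℂ => Q (x, t, w)) z) :
    deriv (fun t : ℂ => Q (x, t, w)) z = Q' (0, 1, 0) := by
  have hj : HasFDerivAt (fun t : ℂ => ((x, t, w) : ℝ × ℂ × ℂ))
      ((0 : ℂ →L[ℝ] ℝ).prod ((ContinuousLinearMap.id ℝ ℂ).prod 0)) z :=
    HasFDerivAt.prodMk (hasFDerivAt_const x z) (HasFDerivAt.prodMk (hasFDerivAt_id z) (hasFDerivAt_const w z))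
  have h2 := h.comp z hj
  have h3 := (hd.hasDerivAt.hasFDerivAt.restrictScalars ℝ).unique h2
  have h4 := congrArg (fun L : ℂ →L[ℝ] ℂ => L 1) h3
  simpa using h4

lemma derivW {Q : ℝ × ℂ × ℂ → ℂ} {Q' : ℝ × ℂ × ℂ →L[ℝ] ℂ} {x : ℝ} {z w : ℂ}
    (h : HasFDerivAt Q Q' (x, z, w))
    (hd : DifferentiableAt ℂ (fun t : ℂ => Q (x, z, t)) w) :
    deriv (fun t : ℂ => Q (x, z, t)) w = Q' (0, 0, 1) := by
  have hj : HasFDerivAt (fun t : ℂ => ((x, z, t) : ℝ × ℂ × ℂ))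
      ((0 : ℂ →L[ℝ] ℝ).prod ((0 : ℂ →L[ℝ] ℂ).prod (ContinuousLinearMap.id ℝ ℂ))) w :=
    HasFDerivAt.prodMk (hasFDerivAt_const x w) (HasFDerivAt.prodMk (hasFDerivAt_const z w) (hasFDerivAt_id w))
  have h2 := h.comp w hj
  have h3 := (hd.hasDerivAt.hasFDerivAt.restrictScalars ℝ).unique h2
  have h4 := congrArg (fun L : ℂ →L[ℝ] ℂ => L 1) h3
  simpa using h4

/-- The joint function. -/
def PP (f : F3) : ℝ × ℂ × ℂ → ℂ := fun p => f p.1 p.2.1 p.2.2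
/-- Its total derivative. -/
def GG (f : F3) : ℝ × ℂ × ℂ → (ℝ × ℂ × ℂ →L[ℝ] ℂ) := fderiv ℝ (PP f)
/-- Its second total derivative. -/
def HH (f : F3) : ℝ × ℂ × ℂ → (ℝ × ℂ × ℂ →L[ℝ] (ℝ × ℂ × ℂ →L[ℝ] ℂ)) := fderiv ℝ (GG f)

variable {f : F3}

lemma hGd (hf : Sm3 f) (p : ℝ × ℂ × ℂ) : HasFDerivAt (PP f) (GG f p) p :=
  ((hf.1.differentiable (by simp)) p).hasFDerivAt

lemma smGG (hf : Sm3 f) : ContDiff ℝ (⊤ : ℕ∞) (GG f) := hf.1.fderiv_right (by simp)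

lemma hHd (hf : Sm3 f) (p : ℝ × ℂ × ℂ) : HasFDerivAt (GG f) (HH f p) p :=
  (((smGG hf).differentiable (by simp)) p).hasFDerivAt

lemma hQfd (hf : Sm3 f) (v : ℝ × ℂ × ℂ) (p : ℝ × ℂ × ℂ) :
    HasFDerivAt (fun q => GG f q v)
      ((ContinuousLinearMap.apply ℝ ℂ v).comp (HH f p)) p := by
  have h := (ContinuousLinearMap.apply ℝ ℂ v).hasFDerivAt.comp p (hHd hf p)
  have hfun : (fun q => GG f q v) = fun q => (ContinuousLinearMap.apply ℝ ℂ v) (GG f q) := by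
    ext q; simp
  rw [hfun]
  exact h

lemma hsymm (hf : Sm3 f) (p : ℝ × ℂ × ℂ) (u v : ℝ × ℂ × ℂ) : HH f p u v = HH f p v u :=
  second_derivative_symmetric (fun q => hGd hf q) (hHd hf p) u v

lemma dx_eq (hf : Sm3 f) (x : ℝ) (z w : ℂ) : Dx f x z w = GG f (x, z, w) (1, 0, 0) :=
  (sliceX (hGd hf (x, z, w))).deriv

lemma dz_eq (hf : Sm3 f) (x : ℝ) (z w : ℂ) : Dz f x z w = GG f (x, z, w) (0, 1, 0) :=
  derivZ (hGd hf (x, z, w)) (hf.2.1 x w z)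

lemma dw_eq (hf : Sm3 f) (x : ℝ) (z w : ℂ) : Dw f x z w = GG f (x, z, w) (0, 0, 1) :=
  derivW (hGd hf (x, z, w)) (hf.2.2.1 x z w)

/-- x-derivative of a directional-derivative field -/
lemma hXdir (hf : Sm3 f) (v : ℝ × ℂ × ℂ) (x : ℝ) (z w : ℂ) :
    HasDerivAt (fun t : ℝ => GG f (t, z, w) v) (HH f (x, z, w) (1, 0, 0) v) x := by
  have h := sliceX (hQfd hf v (x, z, w))
  simpa using h

lemma dxdx (hf : Sm3 f) (x : ℝ) (z w : ℂ) :
    Dx (Dx f) x z w = HH f (x, z, w) (1, 0, 0) (1, 0, 0) := by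
  show deriv (fun t : ℝ => Dx f t z w) x = _
  rw [show (fun t : ℝ => Dx f t z w) = fun t => GG f (t, z, w) (1, 0, 0) from
    funext fun t => dx_eq hf t z w]
  exact (hXdir hf _ x z w).deriv

lemma dxdz (hf : Sm3 f) (x : ℝ) (z w : ℂ) :
    Dx (Dz f) x z w = HH f (x, z, w) (1, 0, 0) (0, 1, 0) := by
  show deriv (fun t : ℝ => Dz f t z w) x = _
  rw [show (fun t : ℝ => Dz f t z w) = fun t => GG f (t, z, w) (0, 1, 0) from
    funext fun t => dz_eq hf t z w]
  exact (hXdir hf _ x z w).deriv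

lemma dxdw (hf : Sm3 f) (x : ℝ) (z w : ℂ) :
    Dx (Dw f) x z w = HH f (x, z, w) (1, 0, 0) (0, 0, 1) := by
  show deriv (fun t : ℝ => Dw f t z w) x = _
  rw [show (fun t : ℝ => Dw f t z w) = fun t => GG f (t, z, w) (0, 0, 1) from
    funext fun t => dw_eq hf t z w]
  exact (hXdir hf _ x z w).deriv

lemma dzdx (hf : Sm3 f) (x : ℝ) (z w : ℂ) :
    Dz (Dx f) x z w = HH f (x, z, w) (0, 1, 0) (1, 0, 0) := by
  have hfun : (fun t : ℂ => Dx f x t w) = fun t => GG f (x, t, w) (1, 0, 0) :=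
    funext fun t => dx_eq hf x t w
  have hd : DifferentiableAt ℂ (fun t : ℂ => GG f (x, t, w) (1, 0, 0)) z :=
    hfun ▸ (hf.2.2.2.1 x w z)
  show deriv (fun t : ℂ => Dx f x t w) z = _
  rw [hfun, derivZ (hQfd hf _ (x, z, w)) hd]
  simp

lemma dwdx (hf : Sm3 f) (x : ℝ) (z w : ℂ) :
    Dw (Dx f) x z w = HH f (x, z, w) (0, 0, 1) (1, 0, 0) := by
  have hfun : (fun t : ℂ => Dx f x z t) = fun t => GG f (x, z, t) (1, 0, 0) :=
    funext fun t => dx_eq hf x z t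
  have hd : DifferentiableAt ℂ (fun t : ℂ => GG f (x, z, t) (1, 0, 0)) w :=
    hfun ▸ (hf.2.2.2.2.1 x z w)
  show deriv (fun t : ℂ => Dx f x z t) w = _
  rw [hfun, derivW (hQfd hf _ (x, z, w)) hd]
  simp

lemma dzdw (hf : Sm3 f) (x : ℝ) (z w : ℂ) :
    Dz (Dw f) x z w = HH f (x, z, w) (0, 1, 0) (0, 0, 1) := by
  have hfun : (fun t : ℂ => Dw f x t w) = fun t => GG f (x, t, w) (0, 0, 1) :=
    funext fun t => dw_eq hf x t w
  have hd : DifferentiableAt ℂ (fun t : ℂ => GG f (x, t, w) (0, 0, 1)) z :=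
    hfun ▸ (hf.2.2.2.2.2.1 x w z)
  show deriv (fun t : ℂ => Dw f x t w) z = _
  rw [hfun, derivZ (hQfd hf _ (x, z, w)) hd]
  simp

lemma dwdz (hf : Sm3 f) (x : ℝ) (z w : ℂ) :
    Dw (Dz f) x z w = HH f (x, z, w) (0, 0, 1) (0, 1, 0) := by
  have hfun : (fun t : ℂ => Dz f x z t) = fun t => GG f (x, z, t) (0, 1, 0) :=
    funext fun t => dz_eq hf x z t
  have hd : DifferentiableAt ℂ (fun t : ℂ => GG f (x, z, t) (0, 1, 0)) w :=
    hfun ▸ (hf.2.2.2.2.2.2 x z w)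
  show deriv (fun t : ℂ => Dz f x z t) w = _
  rw [hfun, derivW (hQfd hf _ (x, z, w)) hd]
  simp

lemma mixed_zw (hf : Sm3 f) (x : ℝ) (z w : ℂ) :
    Dw (Dz f) x z w = Dz (Dw f) x z w := by
  rw [dwdz hf, dzdw hf]; exact hsymm hf _ _ _

lemma mixed_xz (hf : Sm3 f) (x : ℝ) (z w : ℂ) :
    Dz (Dx f) x z w = Dx (Dz f) x z w := by
  rw [dzdx hf, dxdz hf]; exact hsymm hf _ _ _

lemma mixed_xw (hf : Sm3 f) (x : ℝ) (z w : ℂ) :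
    Dw (Dx f) x z w = Dx (Dw f) x z w := by
  rw [dwdx hf, dxdw hf]; exact hsymm hf _ _ _

/- HasDerivAt facts at a point -/
lemma hWDz (hf : Sm3 f) (x : ℝ) (z w : ℂ) :
    HasDerivAt (fun t : ℂ => Dz f x z t) (Dw (Dz f) x z w) w :=
  (hf.2.2.2.2.2.2 x z w).hasDerivAt

lemma hWDx (hf : Sm3 f) (x : ℝ) (z w : ℂ) :
    HasDerivAt (fun t : ℂ => Dx f x z t) (Dw (Dx f) x z w) w :=
  (hf.2.2.2.2.1 x z w).hasDerivAt

lemma hZDx (hf : Sm3 f) (x : ℝ) (z w : ℂ) :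
    HasDerivAt (fun t : ℂ => Dx f x t w) (Dz (Dx f) x z w) z :=
  (hf.2.2.2.1 x w z).hasDerivAt

lemma hZDw (hf : Sm3 f) (x : ℝ) (z w : ℂ) :
    HasDerivAt (fun t : ℂ => Dw f x t w) (Dz (Dw f) x z w) z :=
  (hf.2.2.2.2.2.1 x w z).hasDerivAt

lemma hXDz (hf : Sm3 f) (x : ℝ) (z w : ℂ) :
    HasDerivAt (fun t : ℝ => Dz f t z w) (Dx (Dz f) x z w) x := by
  rw [dxdz hf]
  rw [show (fun t : ℝ => Dz f t z w) = fun t => GG f (t, z, w) (0, 1, 0) from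
    funext fun t => dz_eq hf t z w]
  exact hXdir hf _ x z w

lemma hXDw (hf : Sm3 f) (x : ℝ) (z w : ℂ) :
    HasDerivAt (fun t : ℝ => Dw f t z w) (Dx (Dw f) x z w) x := by
  rw [dxdw hf]
  rw [show (fun t : ℝ => Dw f t z w) = fun t => GG f (t, z, w) (0, 0, 1) from
    funext fun t => dw_eq hf t z w]
  exact hXdir hf _ x z w

lemma hXDx (hf : Sm3 f) (x : ℝ) (z w : ℂ) :
    HasDerivAt (fun t : ℝ => Dx f t z w) (Dx (Dx f) x z w) x := by
  rw [dxdx hf]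
  rw [show (fun t : ℝ => Dx f t z w) = fun t => GG f (t, z, w) (1, 0, 0) from
    funext fun t => dx_eq hf t z w]
  exact hXdir hf _ x z w

end BacklundAux

open BacklundAux in
theorem backlund_compatibility
    (lam : ℂ) (hlam : lam ≠ 0) (ψ ω : F3) (hψ : Sm3 ψ) (hω : Sm3 ω)
    (hB1 : ∀ x z w, Dz ω x z w =
      Dz ψ x z w - 2 * lam * Complex.exp ((Dx ψ x z w + Dx ω x z w) / 2))
    (hB2 : ∀ x z w, Dw ω x z w =
      -Dw ψ x z w + 2 * lam⁻¹ * Complex.exp ((Dx ψ x z w - Dx ω x z w) / 2)) :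
    ∀ x z w,
      ((Dw (Dz ω) x z w = Dz (Dw ω) x z w ↔
          Dw (Dz ψ) x z w = Complex.exp (Dx ψ x z w) * Dx (Dx ψ) x z w)
      ∧
       (Dw (Dz ψ) x z w = Dz (Dw ψ) x z w ↔
          Dw (Dz ω) x z w - Complex.exp (Dx ψ x z w) * Dx (Dx ω) x z w = 0)) := by
  intro x z w
  have s1 : Dw (Dz ψ) x z w = Dz (Dw ψ) x z w := mixed_zw hψ x z w
  have s2 : Dw (Dz ω) x z w = Dz (Dw ω) x z w := mixed_zw hω x z w
  have s3ψ : Dz (Dx ψ) x z w = Dx (Dz ψ) x z w := mixed_xz hψ x z w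
  have s3ω : Dz (Dx ω) x z w = Dx (Dz ω) x z w := mixed_xz hω x z w
  have s5ψ : Dw (Dx ψ) x z w = Dx (Dw ψ) x z w := mixed_xw hψ x z w
  have s5ω : Dw (Dx ω) x z w = Dx (Dw ω) x z w := mixed_xw hω x z w
  -- derivative of B1 in the w-direction
  have hE1 : Dw (Dz ω) x z w =
      Dw (Dz ψ) x z w - 2 * lam * (Complex.exp ((Dx ψ x z w + Dx ω x z w) / 2) *
        ((Dw (Dx ψ) x z w + Dw (Dx ω) x z w) / 2)) := by
    have hc : HasDerivAt (fun t : ℂ => Dz ψ x z t -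
        2 * lam * Complex.exp ((Dx ψ x z t + Dx ω x z t) / 2))
        (Dw (Dz ψ) x z w - 2 * lam * (Complex.exp ((Dx ψ x z w + Dx ω x z w) / 2) *
          ((Dw (Dx ψ) x z w + Dw (Dx ω) x z w) / 2))) w :=
      (hWDz hψ x z w).sub
        (((((hWDx hψ x z w).add (hWDx hω x z w)).div_const 2).cexp).const_mul (2 * lam))
    have hfun : (fun t : ℂ => Dz ω x z t) = fun t => Dz ψ x z t -
        2 * lam * Complex.exp ((Dx ψ x z t + Dx ω x z t) / 2) :=
      funext fun t => hB1 x z t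
    show deriv (fun t : ℂ => Dz ω x z t) w = _
    rw [hfun]
    exact hc.deriv
  -- derivative of B2 in the z-direction
  have hE2 : Dz (Dw ω) x z w =
      -Dz (Dw ψ) x z w + 2 * lam⁻¹ * (Complex.exp ((Dx ψ x z w - Dx ω x z w) / 2) *
        ((Dz (Dx ψ) x z w - Dz (Dx ω) x z w) / 2)) := by
    have hc : HasDerivAt (fun t : ℂ => -Dw ψ x t w +
        2 * lam⁻¹ * Complex.exp ((Dx ψ x t w - Dx ω x t w) / 2))
        (-Dz (Dw ψ) x z w + 2 * lam⁻¹ * (Complex.exp ((Dx ψ x z w - Dx ω x z w) / 2) *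
          ((Dz (Dx ψ) x z w - Dz (Dx ω) x z w) / 2))) z :=
      ((hZDw hψ x z w).neg).add
        (((((hZDx hψ x z w).sub (hZDx hω x z w)).div_const 2).cexp).const_mul (2 * lam⁻¹))
    have hfun : (fun t : ℂ => Dw ω x t w) = fun t => -Dw ψ x t w +
        2 * lam⁻¹ * Complex.exp ((Dx ψ x t w - Dx ω x t w) / 2) :=
      funext fun t => hB2 x t w
    show deriv (fun t : ℂ => Dw ω x t w) z = _
    rw [hfun]
    exact hc.deriv
  -- derivative of B1 in the x-direction
  have hE3 : Dx (Dz ω) x z w =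
      Dx (Dz ψ) x z w - 2 * lam * (Complex.exp ((Dx ψ x z w + Dx ω x z w) / 2) *
        ((Dx (Dx ψ) x z w + Dx (Dx ω) x z w) / 2)) := by
    have hc : HasDerivAt (fun t : ℝ => Dz ψ t z w -
        2 * lam * Complex.exp ((Dx ψ t z w + Dx ω t z w) / 2))
        (Dx (Dz ψ) x z w - 2 * lam * (Complex.exp ((Dx ψ x z w + Dx ω x z w) / 2) *
          ((Dx (Dx ψ) x z w + Dx (Dx ω) x z w) / 2))) x :=
      (hXDz hψ x z w).sub
        (((((hXDx hψ x z w).add (hXDx hω x z w)).div_const 2).cexp).const_mul (2 * lam))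
    have hfun : (fun t : ℝ => Dz ω t z w) = fun t => Dz ψ t z w -
        2 * lam * Complex.exp ((Dx ψ t z w + Dx ω t z w) / 2) :=
      funext fun t => hB1 t z w
    show deriv (fun t : ℝ => Dz ω t z w) x = _
    rw [hfun]
    exact hc.deriv
  -- derivative of B2 in the x-direction
  have hE4 : Dx (Dw ω) x z w =
      -Dx (Dw ψ) x z w + 2 * lam⁻¹ * (Complex.exp ((Dx ψ x z w - Dx ω x z w) / 2) *
        ((Dx (Dx ψ) x z w - Dx (Dx ω) x z w) / 2)) := by
    have hc : HasDerivAt (fun t : ℝ => -Dw ψ t z w +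
        2 * lam⁻¹ * Complex.exp ((Dx ψ t z w - Dx ω t z w) / 2))
        (-Dx (Dw ψ) x z w + 2 * lam⁻¹ * (Complex.exp ((Dx ψ x z w - Dx ω x z w) / 2) *
          ((Dx (Dx ψ) x z w - Dx (Dx ω) x z w) / 2))) x :=
      ((hXDw hψ x z w).neg).add
        (((((hXDx hψ x z w).sub (hXDx hω x z w)).div_const 2).cexp).const_mul (2 * lam⁻¹))
    have hfun : (fun t : ℝ => Dw ω t z w) = fun t => -Dw ψ t z w +
        2 * lam⁻¹ * Complex.exp ((Dx ψ t z w - Dx ω t z w) / 2) :=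
      funext fun t => hB2 t z w
    show deriv (fun t : ℝ => Dw ω t z w) x = _
    rw [hfun]
    exact hc.deriv
  have hEpm : Complex.exp ((Dx ψ x z w + Dx ω x z w) / 2) *
      Complex.exp ((Dx ψ x z w - Dx ω x z w) / 2) = Complex.exp (Dx ψ x z w) := by
    rw [← Complex.exp_add]; congr 1; ring
  have key1 : Dw (Dz ω) x z w = Dw (Dz ψ) x z w -
      Complex.exp (Dx ψ x z w) * (Dx (Dx ψ) x z w - Dx (Dx ω) x z w) := by
    rw [hE1, s5ψ, s5ω, hE4, ← hEpm]
    field_simp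
    ring
  have key2 : Dz (Dw ω) x z w = -Dz (Dw ψ) x z w +
      Complex.exp (Dx ψ x z w) * (Dx (Dx ψ) x z w + Dx (Dx ω) x z w) := by
    rw [hE2, s3ψ, s3ω, hE3, ← hEpm]
    field_simp
    ring
  have hBF : Dw (Dz ψ) x z w = Complex.exp (Dx ψ x z w) * Dx (Dx ψ) x z w := by
    have h := s2
    rw [key1, key2, ← s1] at h
    linear_combination h / 2
  have hOM : Dw (Dz ω) x z w = Complex.exp (Dx ψ x z w) * Dx (Dx ω) x z w := by
    rw [key1, hBF]; ring
  exact ⟨iff_of_true s2 hBF, iff_of_true s1 (by rw [hOM]; ring)⟩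
end
end

section
/- The vector fields X₁ = q∂_q + q̄∂_{q̄} + (q+q̄+ψ)∂_ψ, X₂ = (q−q̄)∂_ψ, X_{a} = a(z)∂_z − a'(z)q∂_ψ, X_{c} = c(z)∂_q, and X_{d} = d(z)∂_ψ (with a, c, d holomorphic), together with their complex conjugates, are point symmetry generators of the equation ψ_{q q̄}ψ_{z z̄} − ψ_{q z̄}ψ_{q̄ z} = e^{ψ_q + ψ_{q̄}}(ψ_{q q̄}² − ψ_{qq}ψ_{q̄ q̄}): i.e., for each generator X, the corresponding Lie symmetry characteristic φ satisfies the linearization of the equation on its solution manifold. -/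
noncomputable section

/-- The Legendre-transformed HCMA operator
E(ψ) = ψ_{qq̄}ψ_{zz̄} − ψ_{qz̄}ψ_{q̄z} − e^{ψ_q+ψ_q̄}(ψ_{qq̄}² − ψ_{qq}ψ_{q̄q̄}).
Slots: 1 = q, 2 = q̄, 3 = z, 4 = z̄. -/
def Epde (ψ : F4) : F4 := fun a b c d =>
  D2 (D1 ψ) a b c d * D4 (D3 ψ) a b c d - D4 (D1 ψ) a b c d * D3 (D2 ψ) a b c d
  - Complex.exp (D1 ψ a b c d + D2 ψ a b c d) *
      ((D2 (D1 ψ) a b c d) ^ 2 - D1 (D1 ψ) a b c d * D2 (D2 ψ) a b c d)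

/-- Linearization (Fréchet derivative) of `Epde` at ψ, applied to φ. -/
def LinE (ψ φ : F4) : F4 := fun a b c d =>
  D2 (D1 φ) a b c d * D4 (D3 ψ) a b c d + D2 (D1 ψ) a b c d * D4 (D3 φ) a b c d
  - D4 (D1 φ) a b c d * D3 (D2 ψ) a b c d - D4 (D1 ψ) a b c d * D3 (D2 φ) a b c d
  - Complex.exp (D1 ψ a b c d + D2 ψ a b c d) *
      ( (D1 φ a b c d + D2 φ a b c d) *
          ((D2 (D1 ψ) a b c d) ^ 2 - D1 (D1 ψ) a b c d * D2 (D2 ψ) a b c d)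
        + 2 * D2 (D1 ψ) a b c d * D2 (D1 φ) a b c d
        - D1 (D1 φ) a b c d * D2 (D2 ψ) a b c d
        - D1 (D1 ψ) a b c d * D2 (D2 φ) a b c d )

def IsPartialDeriv (P : F4 → F4) : Prop :=
  ∃ v, ∀ f, Sm f → ∀ a b c d, P f a b c d = fderiv ℂ (uncurry4 f) (a, b, c, d) v

section Calculus

variable {P Q R : F4 → F4} {f g : F4}

theorem contDiff_uncurry4 (hf : Sm f) : ContDiff ℂ ⊤ (uncurry4 f) := hf

theorem differentiable_uncurry4 (hf : Sm f) : Differentiable ℂ (uncurry4 f) :=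
  (contDiff_uncurry4 hf).differentiable (by simp)

theorem sm_add (hf : Sm f) (hg : Sm g) : Sm (f + g) := ContDiff.add hf hg

theorem sm_sub (hf : Sm f) (hg : Sm g) : Sm (f - g) := ContDiff.sub hf hg

theorem sm_mul (hf : Sm f) (hg : Sm g) : Sm (f * g) := ContDiff.mul hf hg

theorem sm_cexp (hf : Sm f) : Sm (fun a b c d => Complex.exp (f a b c d)) := ContDiff.cexp hf

theorem isPartialDeriv_D1 : IsPartialDeriv D1 := ⟨(1, 0, 0, 0), fun _ hf a b c d =>
  ((differentiable_uncurry4 hf _).hasFDerivAt.comp_hasDerivAt a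
    ((hasDerivAt_id a).prodMk (hasDerivAt_const a (b, c, d)))).deriv⟩

theorem isPartialDeriv_D2 : IsPartialDeriv D2 := ⟨(0, 1, 0, 0), fun _ hf a b c d =>
  ((differentiable_uncurry4 hf _).hasFDerivAt.comp_hasDerivAt b
    ((hasDerivAt_const b a).prodMk ((hasDerivAt_id b).prodMk (hasDerivAt_const b (c, d))))).deriv⟩

theorem isPartialDeriv_D3 : IsPartialDeriv D3 := ⟨(0, 0, 1, 0), fun _ hf a b c d =>
  ((differentiable_uncurry4 hf _).hasFDerivAt.comp_hasDerivAt c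
    ((hasDerivAt_const c a).prodMk ((hasDerivAt_const c b).prodMk
      ((hasDerivAt_id c).prodMk (hasDerivAt_const c d))))).deriv⟩

theorem isPartialDeriv_D4 : IsPartialDeriv D4 := ⟨(0, 0, 0, 1), fun _ hf a b c d =>
  ((differentiable_uncurry4 hf _).hasFDerivAt.comp_hasDerivAt d
    ((hasDerivAt_const d a).prodMk ((hasDerivAt_const d b).prodMk
      ((hasDerivAt_const d c).prodMk (hasDerivAt_id d))))).deriv⟩

namespace IsPartialDeriv

theorem sm (hP : IsPartialDeriv P) (hf : Sm f) : Sm (P f) := by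
  obtain ⟨v, hP⟩ := hP
  change ContDiff ℂ ⊤ (uncurry4 (P f))
  rw [show uncurry4 (P f) = fun p => fderiv ℂ (uncurry4 f) p v from
    funext fun _ => hP f hf _ _ _ _]
  exact ((contDiff_uncurry4 hf).fderiv_right le_top).clm_apply contDiff_const

theorem map_add_apply (hP : IsPartialDeriv P) (hf : Sm f) (hg : Sm g) (a b c d : ℂ) :
    P (f + g) a b c d = P f a b c d + P g a b c d := by
  obtain ⟨v, hP⟩ := hP
  rw [hP _ (sm_add hf hg), hP f hf, hP g hg]
  exact congrArg (· v) (fderiv_add (differentiable_uncurry4 hf _) (differentiable_uncurry4 hg _))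

theorem map_sub_apply (hP : IsPartialDeriv P) (hf : Sm f) (hg : Sm g) (a b c d : ℂ) :
    P (f - g) a b c d = P f a b c d - P g a b c d := by
  obtain ⟨v, hP⟩ := hP
  rw [hP _ (sm_sub hf hg), hP f hf, hP g hg]
  exact congrArg (· v) (fderiv_sub (differentiable_uncurry4 hf _) (differentiable_uncurry4 hg _))

theorem map_mul_apply (hP : IsPartialDeriv P) (hf : Sm f) (hg : Sm g) (a b c d : ℂ) :
    P (f * g) a b c d = P f a b c d * g a b c d + f a b c d * P g a b c d := by
  obtain ⟨v, hP⟩ := hP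
  rw [hP _ (sm_mul hf hg), hP f hf, hP g hg]
  erw [fderiv_mul (differentiable_uncurry4 hf _) (differentiable_uncurry4 hg _)]
  simp only [uncurry4, add_apply, smul_apply, smul_eq_mul]
  ring

theorem map_cexp_apply (hP : IsPartialDeriv P) (hf : Sm f) (a b c d : ℂ) :
    P (fun a b c d => Complex.exp (f a b c d)) a b c d = Complex.exp (f a b c d) * P f a b c d := by
  obtain ⟨v, hP⟩ := hP
  rw [hP _ (sm_cexp hf), hP f hf]
  erw [((differentiable_uncurry4 hf _).hasFDerivAt.cexp).fderiv]
  simp [uncurry4]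

theorem map_add (hP : IsPartialDeriv P) (hf : Sm f) (hg : Sm g) : P (f + g) = P f + P g :=
  funext fun a => funext fun b => funext fun c => funext fun d => hP.map_add_apply hf hg a b c d

theorem map_sub (hP : IsPartialDeriv P) (hf : Sm f) (hg : Sm g) : P (f - g) = P f - P g :=
  funext fun a => funext fun b => funext fun c => funext fun d => hP.map_sub_apply hf hg a b c d

theorem map_mul (hP : IsPartialDeriv P) (hf : Sm f) (hg : Sm g) : P (f * g) = P f * g + f * P g :=
  funext fun a => funext fun b => funext fun c => funext fun d => hP.map_mul_apply hf hg a b c d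

theorem map_zero (hP : IsPartialDeriv P) : P 0 = 0 := by
  obtain ⟨v, hP⟩ := hP
  funext a b c d
  rw [hP 0 contDiff_const]
  simp [show uncurry4 0 = fun _ => 0 from rfl]

theorem comm (hP : IsPartialDeriv P) (hQ : IsPartialDeriv Q) (hf : Sm f) : P (Q f) = Q (P f) := by
  have hPf := hP.sm hf
  have hQf := hQ.sm hf
  obtain ⟨v, hP⟩ := hP
  obtain ⟨w, hQ⟩ := hQ
  have hf' : Differentiable ℂ (fderiv ℂ (uncurry4 f)) :=
    ((contDiff_uncurry4 hf).fderiv_right (m := ⊤) le_top).differentiable (by simp)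
  funext a b c d
  rw [hP _ hQf, hQ _ hPf,
    show uncurry4 (Q f) = fun p => fderiv ℂ (uncurry4 f) p w from funext fun _ => hQ f hf _ _ _ _,
    show uncurry4 (P f) = fun p => fderiv ℂ (uncurry4 f) p v from funext fun _ => hP f hf _ _ _ _,
    fderiv_clm_apply (hf' _) (differentiableAt_const _),
    fderiv_clm_apply (hf' _) (differentiableAt_const _)]
  simpa using ((contDiff_uncurry4 hf).contDiffAt.isSymmSndFDerivAt le_top) v w

theorem comm₂ (hP : IsPartialDeriv P) (hQ : IsPartialDeriv Q) (hR : IsPartialDeriv R)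
    (hf : Sm f) : P (Q (R f)) = Q (R (P f)) := by
  rw [hP.comm hQ (hR.sm hf), hP.comm hR hf]

end IsPartialDeriv

end Calculus

/-- The symbol of `LinE ψ`, i.e. `LinE ψ (f * g) - f * LinE ψ g - g * LinE ψ f`. -/
def linSymbol (ψ f g : F4) : F4 := fun a b c d =>
  (D1 f a b c d * D2 g a b c d + D2 f a b c d * D1 g a b c d) * D4 (D3 ψ) a b c d
  + D2 (D1 ψ) a b c d * (D3 f a b c d * D4 g a b c d + D4 f a b c d * D3 g a b c d)
  - (D1 f a b c d * D4 g a b c d + D4 f a b c d * D1 g a b c d) * D3 (D2 ψ) a b c d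
  - D4 (D1 ψ) a b c d * (D2 f a b c d * D3 g a b c d + D3 f a b c d * D2 g a b c d)
  - Complex.exp (D1 ψ a b c d + D2 ψ a b c d) *
      (2 * D2 (D1 ψ) a b c d * (D1 f a b c d * D2 g a b c d + D2 f a b c d * D1 g a b c d)
        - 2 * D1 f a b c d * D1 g a b c d * D2 (D2 ψ) a b c d
        - 2 * D1 (D1 ψ) a b c d * D2 f a b c d * D2 g a b c d)

section Linearization

variable {P : F4 → F4} {ψ f g : F4}

theorem linE_add (ψ : F4) (hf : Sm f) (hg : Sm g) : LinE ψ (f + g) = LinE ψ f + LinE ψ g := by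
  funext a b c d
  simp only [LinE, IsPartialDeriv.map_add, IsPartialDeriv.map_add_apply, IsPartialDeriv.sm,
    isPartialDeriv_D1, isPartialDeriv_D2, isPartialDeriv_D3, isPartialDeriv_D4, hf, hg,
    Pi.add_apply]
  ring

theorem linE_sub (ψ : F4) (hf : Sm f) (hg : Sm g) : LinE ψ (f - g) = LinE ψ f - LinE ψ g := by
  funext a b c d
  simp only [LinE, IsPartialDeriv.map_sub, IsPartialDeriv.map_sub_apply, IsPartialDeriv.sm,
    isPartialDeriv_D1, isPartialDeriv_D2, isPartialDeriv_D3, isPartialDeriv_D4, hf, hg,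
    Pi.sub_apply]
  ring

theorem linE_mul (ψ : F4) (hf : Sm f) (hg : Sm g) :
    LinE ψ (f * g) = f * LinE ψ g + g * LinE ψ f + linSymbol ψ f g := by
  funext a b c d
  simp (maxDischargeDepth := 4) only [LinE, linSymbol, IsPartialDeriv.map_add_apply,
    IsPartialDeriv.map_mul, IsPartialDeriv.map_mul_apply, IsPartialDeriv.sm, isPartialDeriv_D1,
    isPartialDeriv_D2, isPartialDeriv_D3, isPartialDeriv_D4, hf, hg, sm_mul, Pi.add_apply,
    Pi.mul_apply]
  ring

theorem epde_eq_sub_mul (ψ : F4) :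
    Epde ψ = D2 (D1 ψ) * D4 (D3 ψ) - D4 (D1 ψ) * D3 (D2 ψ)
      - (fun a b c d => Complex.exp ((D1 ψ + D2 ψ) a b c d))
        * (D2 (D1 ψ) * D2 (D1 ψ) - D1 (D1 ψ) * D2 (D2 ψ)) := by
  funext a b c d
  simp only [Epde, Pi.sub_apply, Pi.mul_apply, Pi.add_apply]
  ring

theorem IsPartialDeriv.linE_self (hP : IsPartialDeriv P) (hψ : Sm ψ) :
    LinE ψ (P ψ) = P (Epde ψ) := by
  funext a b c d
  rw [epde_eq_sub_mul]
  simp (maxDischargeDepth := 8) only [IsPartialDeriv.map_sub_apply, IsPartialDeriv.map_mul_apply,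
    IsPartialDeriv.map_add_apply, IsPartialDeriv.map_cexp_apply, IsPartialDeriv.sm,
    isPartialDeriv_D1, isPartialDeriv_D2, isPartialDeriv_D3, isPartialDeriv_D4, hP, hψ,
    sm_sub, sm_mul, sm_add, sm_cexp]
  rw [hP.comm₂ isPartialDeriv_D2 isPartialDeriv_D1 hψ,
    hP.comm₂ isPartialDeriv_D4 isPartialDeriv_D3 hψ,
    hP.comm₂ isPartialDeriv_D4 isPartialDeriv_D1 hψ,
    hP.comm₂ isPartialDeriv_D3 isPartialDeriv_D2 hψ,
    hP.comm₂ isPartialDeriv_D1 isPartialDeriv_D1 hψ,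
    hP.comm₂ isPartialDeriv_D2 isPartialDeriv_D2 hψ,
    hP.comm isPartialDeriv_D1 hψ, hP.comm isPartialDeriv_D2 hψ]
  simp only [LinE, Pi.add_apply, Pi.sub_apply, Pi.mul_apply]
  ring

theorem IsPartialDeriv.linE_self_eq_zero (hP : IsPartialDeriv P) (hψ : Sm ψ)
    (hsol : Epde ψ = 0) : LinE ψ (P ψ) = 0 := by
  rw [hP.linE_self hψ, hsol, hP.map_zero]

end Linearization

section Elementary

theorem D1_eq_zero_of_indep (h : ℂ → ℂ → ℂ → ℂ) :
    D1 (fun _ b c d => h b c d) = fun _ _ _ _ => 0 := by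
  funext; simp [D1]

theorem D2_eq_zero_of_indep (h : ℂ → ℂ → ℂ → ℂ) :
    D2 (fun a _ c d => h a c d) = fun _ _ _ _ => 0 := by
  funext; simp [D2]

theorem D3_eq_zero_of_indep (h : ℂ → ℂ → ℂ → ℂ) :
    D3 (fun a b _ d => h a b d) = fun _ _ _ _ => 0 := by
  funext; simp [D3]

theorem D4_eq_zero_of_indep (h : ℂ → ℂ → ℂ → ℂ) :
    D4 (fun a b c _ => h a b c) = fun _ _ _ _ => 0 := by
  funext; simp [D4]

theorem D1_coord_q : D1 (fun q _ _ _ => q) = fun _ _ _ _ => 1 := by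
  funext; simp [D1]

theorem D2_coord_qbar : D2 (fun _ qb _ _ => qb) = fun _ _ _ _ => 1 := by
  funext; simp [D2]

theorem D3_fun_z (g : ℂ → ℂ) : D3 (fun _ _ z _ => g z) = fun _ _ z _ => deriv g z := rfl

theorem sm_coord_q : Sm (fun q _ _ _ => q) := contDiff_fst

theorem sm_coord_qbar : Sm (fun _ qb _ _ => qb) := contDiff_snd.fst

theorem sm_fun_z {g : ℂ → ℂ} (hg : Differentiable ℂ g) : Sm (fun _ _ z _ => g z) :=
  hg.contDiff.comp contDiff_snd.snd.fst

theorem linE_fun_z (ψ : F4) (g : ℂ → ℂ) : LinE ψ (fun _ _ z _ => g z) = 0 := by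
  funext a b c d
  simp only [LinE, D1_eq_zero_of_indep, D2_eq_zero_of_indep, D3_fun_z, D4_eq_zero_of_indep]
  simp

theorem linE_fun_zbar (ψ : F4) (g : ℂ → ℂ) : LinE ψ (fun _ _ _ w => g w) = 0 := by
  funext a b c d
  simp only [LinE, D1_eq_zero_of_indep, D2_eq_zero_of_indep, D3_eq_zero_of_indep,
    D4_eq_zero_of_indep]
  simp

theorem linE_q_sub_qbar (ψ : F4) : LinE ψ (fun q qb _ _ => q - qb) = 0 := by
  rw [show (fun q qb _ _ => q - qb : F4) = (fun q _ _ _ => q) - (fun _ qb _ _ => qb) from rfl,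
    linE_sub ψ sm_coord_q sm_coord_qbar]
  funext a b c d
  simp only [LinE, D1_coord_q, D2_coord_qbar, D1_eq_zero_of_indep, D2_eq_zero_of_indep,
    D3_eq_zero_of_indep, D4_eq_zero_of_indep, Pi.sub_apply, Pi.zero_apply]
  ring

end Elementary

/-- Complex conjugation of the independent variables. -/
def conjSwap (f : F4) : F4 := fun q qb z w => f qb q w z

section Conjugation

variable {ψ φ f : F4}

theorem sm_conjSwap (hf : Sm f) : Sm (conjSwap f) :=
  (contDiff_uncurry4 hf).comp
    (contDiff_snd.fst.prodMk
      (contDiff_fst.prodMk (contDiff_snd.snd.snd.prodMk contDiff_snd.snd.fst)))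

theorem D1_conjSwap (f : F4) : D1 (conjSwap f) = conjSwap (D2 f) := rfl

theorem D2_conjSwap (f : F4) : D2 (conjSwap f) = conjSwap (D1 f) := rfl

theorem D3_conjSwap (f : F4) : D3 (conjSwap f) = conjSwap (D4 f) := rfl

theorem D1_conjSwap_apply (f : F4) (a b c d : ℂ) : D1 (conjSwap f) a b c d = D2 f b a d c := rfl

theorem D2_conjSwap_apply (f : F4) (a b c d : ℂ) : D2 (conjSwap f) a b c d = D1 f b a d c := rfl

theorem D3_conjSwap_apply (f : F4) (a b c d : ℂ) : D3 (conjSwap f) a b c d = D4 f b a d c := rfl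

theorem D4_conjSwap_apply (f : F4) (a b c d : ℂ) : D4 (conjSwap f) a b c d = D3 f b a d c := rfl

theorem epde_conjSwap (hψ : Sm ψ) (a b c d : ℂ) :
    Epde (conjSwap ψ) a b c d = Epde ψ b a d c := by
  simp only [Epde, D1_conjSwap, D2_conjSwap, D3_conjSwap, D1_conjSwap_apply, D2_conjSwap_apply,
    D3_conjSwap_apply, D4_conjSwap_apply]
  rw [isPartialDeriv_D1.comm isPartialDeriv_D2 hψ, isPartialDeriv_D3.comm isPartialDeriv_D4 hψ,
    add_comm (D2 ψ b a d c)]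
  ring

theorem linE_conjSwap (hψ : Sm ψ) (hφ : Sm φ) (a b c d : ℂ) :
    LinE (conjSwap ψ) (conjSwap φ) a b c d = LinE ψ φ b a d c := by
  simp only [LinE, D1_conjSwap, D2_conjSwap, D3_conjSwap, D1_conjSwap_apply, D2_conjSwap_apply,
    D3_conjSwap_apply, D4_conjSwap_apply]
  rw [isPartialDeriv_D1.comm isPartialDeriv_D2 hψ, isPartialDeriv_D3.comm isPartialDeriv_D4 hψ,
    isPartialDeriv_D1.comm isPartialDeriv_D2 hφ, isPartialDeriv_D3.comm isPartialDeriv_D4 hφ,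
    add_comm (D2 ψ b a d c)]
  ring

end Conjugation

def IsSymmetryChar (ψ φ : F4) : Prop := Sm φ ∧ LinE ψ φ = 0

section Generators

variable {ψ φ : F4}

theorem IsSymmetryChar.conjSwap (hψ : Sm ψ) (h : IsSymmetryChar ψ φ) :
    IsSymmetryChar (conjSwap ψ) (conjSwap φ) := by
  refine ⟨sm_conjSwap h.1, ?_⟩
  funext a b c d
  rw [linE_conjSwap hψ h.1, h.2]
  rfl

theorem linE_scaling (hψ : Sm ψ) (hsol : Epde ψ = 0) :
    LinE ψ (fun q qb z w => q + qb + ψ q qb z w - q * D1 ψ q qb z w - qb * D2 ψ q qb z w)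
      = 0 := by
  have h1 := isPartialDeriv_D1.sm hψ
  have h2 := isPartialDeriv_D2.sm hψ
  have hq := sm_coord_q
  have hqb := sm_coord_qbar
  rw [show (fun q qb z w => q + qb + ψ q qb z w - q * D1 ψ q qb z w - qb * D2 ψ q qb z w)
      = (fun q _ _ _ => q) + (fun _ qb _ _ => qb) + ψ - (fun q _ _ _ => q) * D1 ψ
        - (fun _ qb _ _ => qb) * D2 ψ from rfl,
    linE_sub ψ (sm_sub (sm_add (sm_add hq hqb) hψ) (sm_mul hq h1)) (sm_mul hqb h2),
    linE_sub ψ (sm_add (sm_add hq hqb) hψ) (sm_mul hq h1), linE_add ψ (sm_add hq hqb) hψ,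
    linE_add ψ hq hqb, linE_mul ψ hq h1, linE_mul ψ hqb h2,
    isPartialDeriv_D1.linE_self_eq_zero hψ hsol, isPartialDeriv_D2.linE_self_eq_zero hψ hsol]
  funext a b c d
  simp only [LinE, linSymbol, D1_coord_q, D2_coord_qbar, D1_eq_zero_of_indep, D2_eq_zero_of_indep,
    D3_eq_zero_of_indep, D4_eq_zero_of_indep, Pi.sub_apply, Pi.add_apply, Pi.mul_apply,
    Pi.zero_apply]
  rw [isPartialDeriv_D1.comm isPartialDeriv_D2 hψ]
  ring

theorem isSymmetryChar_conformal (hψ : Sm ψ) (hsol : Epde ψ = 0) {A : ℂ → ℂ}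
    (hA : Differentiable ℂ A) :
    IsSymmetryChar ψ (fun q qb z w => -(deriv A z) * q - A z * D3 ψ q qb z w) := by
  have hA' : Sm (fun _ _ z _ => -deriv A z) := sm_fun_z hA.deriv.neg
  have hA₀ : Sm (fun _ _ z _ => A z) := sm_fun_z hA
  have h3 := isPartialDeriv_D3.sm hψ
  rw [show (fun q qb z w => -(deriv A z) * q - A z * D3 ψ q qb z w)
      = (fun _ _ z _ => -deriv A z) * (fun q _ _ _ => q) - (fun _ _ z _ => A z) * D3 ψ from rfl]
  refine ⟨sm_sub (sm_mul hA' sm_coord_q) (sm_mul hA₀ h3), ?_⟩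
  rw [linE_sub ψ (sm_mul hA' sm_coord_q) (sm_mul hA₀ h3), linE_mul ψ hA' sm_coord_q,
    linE_mul ψ hA₀ h3, isPartialDeriv_D3.linE_self_eq_zero hψ hsol, linE_fun_z, linE_fun_z]
  funext a b c d
  have hE : Epde ψ a b c d = 0 := by rw [hsol]; rfl
  simp only [LinE, linSymbol, D1_coord_q, D3_fun_z, deriv_const', D1_eq_zero_of_indep,
    D2_eq_zero_of_indep, D3_eq_zero_of_indep, D4_eq_zero_of_indep, Pi.sub_apply, Pi.add_apply,
    Pi.mul_apply, Pi.zero_apply]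
  rw [isPartialDeriv_D2.comm isPartialDeriv_D3 hψ]
  simp only [Epde] at hE
  linear_combination (-deriv A c) * hE

theorem isSymmetryChar_shift_q (hψ : Sm ψ) (hsol : Epde ψ = 0) {C : ℂ → ℂ}
    (hC : Differentiable ℂ C) : IsSymmetryChar ψ (fun q qb z w => -(C z) * D1 ψ q qb z w) := by
  have hC' : Sm (fun _ _ z _ => -C z) := sm_fun_z hC.neg
  have h1 := isPartialDeriv_D1.sm hψ
  rw [show (fun q qb z w => -(C z) * D1 ψ q qb z w) = (fun _ _ z _ => -C z) * D1 ψ from rfl]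
  refine ⟨sm_mul hC' h1, ?_⟩
  rw [linE_mul ψ hC' h1, isPartialDeriv_D1.linE_self_eq_zero hψ hsol, linE_fun_z]
  funext a b c d
  simp only [linSymbol, D1_eq_zero_of_indep, D2_eq_zero_of_indep, D3_fun_z, D4_eq_zero_of_indep,
    Pi.add_apply, Pi.mul_apply, Pi.zero_apply]
  ring

end Generators

theorem point_symmetries_of_legendre_hcma_general
    (ψ : F4) (hψ : Sm ψ) (hsol : ∀ a b c d : ℂ, Epde ψ a b c d = 0)
    (A C Dd : ℂ → ℂ) (hA : Differentiable ℂ A) (hC : Differentiable ℂ C)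
    (AB CB DB : ℂ → ℂ) (hAB : Differentiable ℂ AB) (hCB : Differentiable ℂ CB) :
    (∀ q qb z w : ℂ, LinE ψ
        (fun q qb z w => q + qb + ψ q qb z w - q * D1 ψ q qb z w - qb * D2 ψ q qb z w)
        q qb z w = 0) ∧
    (∀ q qb z w : ℂ, LinE ψ (fun q qb _ _ => q - qb) q qb z w = 0) ∧
    (∀ q qb z w : ℂ, LinE ψ
        (fun q qb z w => -(deriv A z) * q - A z * D3 ψ q qb z w) q qb z w = 0) ∧
    (∀ q qb z w : ℂ, LinE ψ
        (fun q qb z w => -(deriv AB w) * qb - AB w * D4 ψ q qb z w) q qb z w = 0) ∧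
    (∀ q qb z w : ℂ, LinE ψ
        (fun q qb z w => -(C z) * D1 ψ q qb z w) q qb z w = 0) ∧
    (∀ q qb z w : ℂ, LinE ψ
        (fun q qb z w => -(CB w) * D2 ψ q qb z w) q qb z w = 0) ∧
    (∀ q qb z w : ℂ, LinE ψ (fun _ _ z _ => Dd z) q qb z w = 0) ∧
    (∀ q qb z w : ℂ, LinE ψ (fun _ _ _ w => DB w) q qb z w = 0) := by
  have hsol₀ : Epde ψ = 0 := by
    funext a b c d
    exact hsol a b c d
  have hψ' : Sm (conjSwap ψ) := sm_conjSwap hψ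
  have hsol' : Epde (conjSwap ψ) = 0 := by
    funext a b c d
    rw [epde_conjSwap hψ]
    exact hsol b a d c
  have pointwise {φ : F4} (h : LinE ψ φ = 0) (q qb z w : ℂ) : LinE ψ φ q qb z w = 0 := by
    rw [h]; rfl
  exact ⟨pointwise (linE_scaling hψ hsol₀), pointwise (linE_q_sub_qbar ψ),
    pointwise (isSymmetryChar_conformal hψ hsol₀ hA).2,
    pointwise ((isSymmetryChar_conformal hψ' hsol' hAB).conjSwap hψ').2,
    pointwise (isSymmetryChar_shift_q hψ hsol₀ hC).2,
    pointwise ((isSymmetryChar_shift_q hψ' hsol' hCB).conjSwap hψ').2,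
    pointwise (linE_fun_z ψ Dd), pointwise (linE_fun_zbar ψ DB)⟩

theorem point_symmetries_of_legendre_hcma
    (ψ : F4) (hψ : Sm ψ) (hsol : ∀ a b c d : ℂ, Epde ψ a b c d = 0)
    (A C Dd : ℂ → ℂ) (hA : Differentiable ℂ A) (hC : Differentiable ℂ C)
    (hD : Differentiable ℂ Dd)
    (AB CB DB : ℂ → ℂ) (hAB : Differentiable ℂ AB) (hCB : Differentiable ℂ CB)
    (hDB : Differentiable ℂ DB) :
    (∀ q qb z w : ℂ, LinE ψ
        (fun q qb z w => q + qb + ψ q qb z w - q * D1 ψ q qb z w - qb * D2 ψ q qb z w)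
        q qb z w = 0) ∧
    (∀ q qb z w : ℂ, LinE ψ (fun q qb _ _ => q - qb) q qb z w = 0) ∧
    (∀ q qb z w : ℂ, LinE ψ
        (fun q qb z w => -(deriv A z) * q - A z * D3 ψ q qb z w) q qb z w = 0) ∧
    (∀ q qb z w : ℂ, LinE ψ
        (fun q qb z w => -(deriv AB w) * qb - AB w * D4 ψ q qb z w) q qb z w = 0) ∧
    (∀ q qb z w : ℂ, LinE ψ
        (fun q qb z w => -(C z) * D1 ψ q qb z w) q qb z w = 0) ∧
    (∀ q qb z w : ℂ, LinE ψ
        (fun q qb z w => -(CB w) * D2 ψ q qb z w) q qb z w = 0) ∧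
    (∀ q qb z w : ℂ, LinE ψ (fun _ _ z _ => Dd z) q qb z w = 0) ∧
    (∀ q qb z w : ℂ, LinE ψ (fun _ _ _ w => DB w) q qb z w = 0) :=
  point_symmetries_of_legendre_hcma_general ψ hψ hsol A C Dd hA hC AB CB DB hAB hCB
end
end

section
/- Let a(z) be holomorphic and ā(z̄) = conj(a(z)). If (z + z̄)(a'(z) + ā'(z̄)) − 2(a(z) + ā(z̄)) = 0 identically on an open set, then a(z) = iβz² + C₃z + iγ and ā(z̄) = −iβz̄² + C₃z̄ − iγ for some real constants β, C₃, γ. -/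
/-!
Written in real parts, the hypothesis says `Re z * Re a'(z) = Re a(z)` on `s`. Differentiating
along the real direction gives `Re z * Re a''(z) = 0`, so `Re a''` vanishes on the nonempty open
part of `s` where `Re z ≠ 0`; by the open mapping and identity theorems `a''` is a purely imaginary
constant. Substituting the resulting quadratic back leaves `Re (a 0 + I * Im a'(0) * z) = 0` on `s`,
and an affine function with constant real part on an open set is constant, so
`Re a(0) = Im a'(0) = 0`.
-/

open Complex Filter Set Topology

theorem Differentiable.apply_eq_of_re_eq_const_on {f : ℂ → ℂ} (hf : Differentiable ℂ f)
    {U : Set ℂ} (hU : IsOpen U) {z₀ : ℂ} (hz₀ : z₀ ∈ U) {c : ℝ} (hre : ∀ z ∈ U, (f z).re = c)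
    (z : ℂ) : f z = f z₀ := by
  obtain ⟨r, hr, hball⟩ := Metric.isOpen_iff.1 hU z₀ hz₀
  have hA : AnalyticOnNhd ℂ f univ := fun z _ ↦ hf.analyticAt z
  obtain ⟨w, hw⟩ := (hA.mono (subset_univ _)).eq_const_of_re_eq_const
    (fun z hz ↦ hre z (hball hz)) Metric.isOpen_ball (Metric.isConnected_ball hr)
  have hloc : f =ᶠ[𝓝 z₀] fun _ ↦ f z₀ := by
    filter_upwards [Metric.ball_mem_nhds z₀ hr] with z hz
    rw [hw z hz, hw z₀ (Metric.mem_ball_self hr)]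
  exact congrFun (hA.eq_of_eventuallyEq analyticOnNhd_const hloc) z

theorem eq_add_mul_of_deriv_eq {𝕜 : Type*} [RCLike 𝕜] {f : 𝕜 → 𝕜} (hf : Differentiable 𝕜 f)
    {c : 𝕜} (h : ∀ z, deriv f z = c) (z : 𝕜) : f z = f 0 + c * z := by
  refine isOpen_univ.eqOn_of_deriv_eq (g := fun z ↦ f 0 + c * z) isPreconnected_univ
    hf.differentiableOn (by fun_prop) (fun z _ ↦ ?_) (mem_univ 0) (by simp) (mem_univ z)
  rw [h z, (((hasDerivAt_id' z).const_mul c).const_add _).deriv, mul_one]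

theorem eq_quadratic_of_deriv_eq {𝕜 : Type*} [RCLike 𝕜] {f : 𝕜 → 𝕜} (hf : Differentiable 𝕜 f)
    {b K : 𝕜} (h : ∀ z, deriv f z = b + K * z) (z : 𝕜) :
    f z = f 0 + b * z + K / 2 * z ^ 2 := by
  refine isOpen_univ.eqOn_of_deriv_eq (g := fun z ↦ f 0 + b * z + K / 2 * z ^ 2)
    isPreconnected_univ hf.differentiableOn (by fun_prop) (fun z _ ↦ ?_) (mem_univ 0) (by simp)
    (mem_univ z)
  rw [h z, ((((hasDerivAt_id' z).const_mul _).const_add _).fun_add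
    ((hasDerivAt_pow 2 z).const_mul _)).deriv]
  ring

theorem re_mul_re_deriv_deriv_eq_zero {a : ℂ → ℂ} (ha : Differentiable ℂ a) {s : Set ℂ}
    (hs : IsOpen s) (h : ∀ z ∈ s, z.re * (deriv a z).re = (a z).re) {z : ℂ} (hz : z ∈ s) :
    z.re * (deriv (deriv a) z).re = 0 := by
  -- On the horizontal line through `z` the real part of `e` is the left side minus the right side.
  set e : ℂ → ℂ := fun w ↦ (z.re - z + w) * deriv a w - a w
  have he : HasDerivAt e (z.re * deriv (deriv a) z) (z + 0) := by
    rw [add_zero]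
    exact (((hasDerivAt_id' z).const_add ((z.re : ℂ) - z)).fun_mul
      (ha.deriv z).hasDerivAt).fun_sub (ha z).hasDerivAt |>.congr_deriv (by ring)
  have hline : HasDerivAt (fun t : ℝ ↦ (e (z + t)).re) (z.re * deriv (deriv a) z).re 0 :=
    (he.comp_const_add z 0).real_of_complex
  have hzero : (fun t : ℝ ↦ (e (z + t)).re) =ᶠ[𝓝 0] fun _ ↦ 0 := by
    have hcont : Tendsto (fun t : ℝ ↦ z + t) (𝓝 0) (𝓝 z) := by
      simpa using ((continuous_ofReal.const_add z).tendsto 0)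
    filter_upwards [hcont (hs.mem_nhds hz)] with t ht
    have := h _ ht
    simp [e] at this ⊢
    linarith
  simpa using hline.unique ((hasDerivAt_const 0 0).congr_of_eventuallyEq hzero)

theorem quadratic_form_of_symmetry_coefficient
    (a : ℂ → ℂ) (ha : Differentiable ℂ a)
    (s : Set ℂ) (hs : IsOpen s) (hne : s.Nonempty)
    (h : ∀ z ∈ s,
      (z + (starRingEnd ℂ) z) * (deriv a z + (starRingEnd ℂ) (deriv a z))
        - 2 * (a z + (starRingEnd ℂ) (a z)) = 0) :
    ∃ β C₃ γ : ℝ, ∀ z : ℂ,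
      a z = Complex.I * (β : ℂ) * z ^ 2 + (C₃ : ℂ) * z + Complex.I * (γ : ℂ) := by
  have hcond (z : ℂ) (hz : z ∈ s) : z.re * (deriv a z).re = (a z).re := by
    have := congrArg re (h z hz)
    simp at this
    linarith
  set U := s ∩ re ⁻¹' {0}ᶜ
  have hU : IsOpen U := hs.inter (isOpen_compl_singleton.preimage continuous_re)
  obtain ⟨z₀, hz₀⟩ : U.Nonempty :=
    ((dense_compl_singleton (0 : ℝ)).preimage isOpenMap_re).inter_open_nonempty s hs hne
  have hre_deriv_deriv (z : ℂ) (hz : z ∈ U) : (deriv (deriv a) z).re = 0 :=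
    (mul_eq_zero.1 (re_mul_re_deriv_deriv_eq_zero ha hs hcond hz.1)).resolve_left hz.2
  have hKre : (deriv (deriv a) z₀).re = 0 := hre_deriv_deriv z₀ hz₀
  have hderiv := eq_add_mul_of_deriv_eq ha.deriv
    (ha.deriv.deriv.apply_eq_of_re_eq_const_on hU hz₀ hre_deriv_deriv)
  have ha_eq := eq_quadratic_of_deriv_eq ha hderiv
  set A₀ := a 0
  set A₁ := deriv a 0
  have hp (z : ℂ) (hz : z ∈ s) : (A₀ + I * A₁.im * z).re = 0 := by
    have := hcond z hz
    rw [hderiv, ha_eq] at this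
    simp [hKre, pow_two] at this ⊢
    linear_combination -this
  obtain ⟨z₁, hz₁⟩ := hne
  have hp_const := (by fun_prop : Differentiable ℂ fun z ↦ A₀ + I * A₁.im * z)
    |>.apply_eq_of_re_eq_const_on hs hz₁ hp
  have hA₁ : A₁.im = 0 := by simpa using congrArg im ((hp_const 1).trans (hp_const 0).symm)
  have hA₀ : A₀.re = 0 := by simpa [hA₁] using hp z₁ hz₁
  refine ⟨(deriv (deriv a) z₀).im / 2, A₁.re, A₀.im, fun z ↦ ?_⟩
  rw [ha_eq z]
  apply Complex.ext <;> simp [hA₀, hA₁, hKre, pow_two] <;> ring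
end
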